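/- arXiv:1806.03990 — 9 statements merged into one kernel-verified Lean document; each statement's English description precedes it below -/
import Mathlib

section
/- Let 𝒫 be a nonempty set of finitely additive probabilities on a measurable space (Ω,𝓕) and let v(A) = inf_{P∈𝒫} P(A) for A ∈ 𝓕 be the associated lower probability. Define core(v) = {P : P is a finitely additive probability on 𝓕 with P(A) ≥ v(A) for all A ∈ 𝓕}. Then core(v) is nonempty, and v is exact: for every A ∈ 𝓕 there exists P ∈ core(v) with P(A) = v(A), i.e. v(A) = min_{P∈core(v)} P(A). -/
open MeasureTheory Filter Topology Set

def IsFinAddProb {Ω : Type*} [MeasurableSpace Ω] (P : Set Ω → ℝ) : Prop :=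
  P ∅ = 0 ∧ P Set.univ = 1 ∧
    (∀ A : Set Ω, MeasurableSet A → 0 ≤ P A ∧ P A ≤ 1) ∧
    (∀ A B : Set Ω, MeasurableSet A → MeasurableSet B → Disjoint A B →
      P (A ∪ B) = P A + P B)

def IsCapacity {Ω : Type*} [MeasurableSpace Ω] (μ : Set Ω → ℝ) : Prop :=
  μ ∅ = 0 ∧ μ Set.univ = 1 ∧
    ∀ A B : Set Ω, MeasurableSet A → MeasurableSet B → A ⊆ B → μ A ≤ μ B

def ContBelow {Ω : Type*} [MeasurableSpace Ω] (μ : Set Ω → ℝ) : Prop :=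
  ∀ A : ℕ → Set Ω, (∀ n, MeasurableSet (A n)) → Monotone A →
    Filter.Tendsto (fun n => μ (A n)) Filter.atTop (nhds (μ (⋃ n, A n)))

def ContAbove {Ω : Type*} [MeasurableSpace Ω] (μ : Set Ω → ℝ) : Prop :=
  ∀ A : ℕ → Set Ω, (∀ n, MeasurableSet (A n)) → Antitone A →
    Filter.Tendsto (fun n => μ (A n)) Filter.atTop (nhds (μ (⋂ n, A n)))

def ContAtEmpty {Ω : Type*} [MeasurableSpace Ω] (μ : Set Ω → ℝ) : Prop :=
  ∀ A : ℕ → Set Ω, (∀ n, MeasurableSet (A n)) → Antitone A → (⋂ n, A n) = ∅ →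
    Filter.Tendsto (fun n => μ (A n)) Filter.atTop (nhds 0)

def ContAtUniv {Ω : Type*} [MeasurableSpace Ω] (μ : Set Ω → ℝ) : Prop :=
  ∀ A : ℕ → Set Ω, (∀ n, MeasurableSet (A n)) → Monotone A → (⋃ n, A n) = Set.univ →
    Filter.Tendsto (fun n => μ (A n)) Filter.atTop (nhds 1)

def conjCap {Ω : Type*} (μ : Set Ω → ℝ) (A : Set Ω) : ℝ := 1 - μ Aᶜ

noncomputable def choquet {Ω : Type*} (μ : Set Ω → ℝ) (ξ : Ω → ℝ) : ℝ :=
  (∫ t in Set.Ioi (0:ℝ), μ {ω | ξ ω ≥ t}) +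
    (∫ t in Set.Iio (0:ℝ), (μ {ω | ξ ω ≥ t} - 1))

noncomputable def choquetE {Ω : Type*} (μ : Set Ω → ℝ) (ξ : Ω → EReal) : ℝ :=
  (∫ t in Set.Ioi (0:ℝ), μ {ω | (t : EReal) ≤ ξ ω}) +
    (∫ t in Set.Iio (0:ℝ), (μ {ω | (t : EReal) ≤ ξ ω} - 1))

def UpperProbOf {Ω : Type*} [MeasurableSpace Ω] (𝒮 : Set (Set Ω → ℝ)) (V : Set Ω → ℝ) : Prop :=
  ∀ A : Set Ω, MeasurableSet A → V A = sSup ((fun P => P A) '' 𝒮)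

def LowerProbOf {Ω : Type*} [MeasurableSpace Ω] (𝒮 : Set (Set Ω → ℝ)) (v : Set Ω → ℝ) : Prop :=
  ∀ A : Set Ω, MeasurableSet A → v A = sInf ((fun P => P A) '' 𝒮)

def ErgodicCap {Ω : Type*} [MeasurableSpace Ω] (μ : Set Ω → ℝ) (θ : Ω → Ω) : Prop :=
  ∀ B : Set Ω, MeasurableSet B → θ ⁻¹' B = B →
    (μ B = 0 ∨ μ B = 1) ∧ (μ B = 0 ∨ μ Bᶜ = 0)

def PreservesCap {Ω : Type*} [MeasurableSpace Ω] (μ : Set Ω → ℝ) (θ : Ω → Ω) : Prop :=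
  ∀ A : Set Ω, MeasurableSet A → μ (θ ⁻¹' A) = μ A

def IndepSigmaWrt {Ω : Type*} (μ : Set Ω → ℝ) (m₁ m₂ : MeasurableSpace Ω) : Prop :=
  ∀ A B : Set Ω, MeasurableSet[m₁] A → MeasurableSet[m₂] B → μ (A ∩ B) = μ A * μ B

/-! The members of `𝒮` lie in the core, so it is nonempty. For exactness at `A`, pick
`Qₙ ∈ 𝒮` with `Qₙ A → v A` and let `P` be the pointwise limit of the `Qₙ` along an ultrafilter
finer than `atTop`. It exists because all values lie in the compact `[0, 1]`, finite additivity
passes to the limit, `P` dominates `v` because every `Qₙ` does, and `P A = v A`. -/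

lemma Ultrafilter.exists_tendsto_of_forall_mem_isCompact {ι X : Type*} [TopologicalSpace X]
    {K : Set X} (hK : IsCompact K) (U : Ultrafilter ι) {f : ι → X} (hf : ∀ i, f i ∈ K) :
    ∃ x ∈ K, Tendsto f U (𝓝 x) :=
  hK.ultrafilter_le_nhds' (U.map f) (U.mem_of_superset univ_mem fun i _ => hf i)

section FinAddProb

variable {Ω : Type*} [MeasurableSpace Ω]

lemma IsFinAddProb.mem_Icc {P : Set Ω → ℝ} (hP : IsFinAddProb P) {B : Set Ω}
    (hB : MeasurableSet B) : P B ∈ Icc (0 : ℝ) 1 :=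
  hP.2.2.1 B hB

lemma IsFinAddProb.of_tendsto {ι : Type*} {L : Filter ι} [L.NeBot] {Q : ι → Set Ω → ℝ}
    (hQ : ∀ i, IsFinAddProb (Q i)) {P : Set Ω → ℝ}
    (hlim : ∀ B, MeasurableSet B → Tendsto (fun i => Q i B) L (𝓝 (P B))) :
    IsFinAddProb P := by
  refine ⟨?_, ?_, fun B hB => ?_, fun B C hB hC hBC => ?_⟩
  · refine tendsto_nhds_unique (hlim ∅ .empty) ?_
    simp only [fun i => (hQ i).1, tendsto_const_nhds]
  · refine tendsto_nhds_unique (hlim univ .univ) ?_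
    simp only [fun i => (hQ i).2.1, tendsto_const_nhds]
  · exact isClosed_Icc.mem_of_tendsto (hlim B hB) (.of_forall fun i => (hQ i).mem_Icc hB)
  · refine tendsto_nhds_unique (hlim _ (hB.union hC)) ?_
    simp only [fun i => (hQ i).2.2.2 B C hB hC hBC]
    exact (hlim B hB).add (hlim C hC)

lemma IsFinAddProb.exists_tendsto_ultrafilter {ι : Type*} (U : Ultrafilter ι)
    {Q : ι → Set Ω → ℝ} (hQ : ∀ i, IsFinAddProb (Q i)) :
    ∃ P, IsFinAddProb P ∧ ∀ B, MeasurableSet B → Tendsto (fun i => Q i B) U (𝓝 (P B)) := by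
  have hlim : ∀ B, MeasurableSet B →
      Tendsto (fun i => Q i B) U (𝓝 (limUnder (U : Filter ι) (fun i => Q i B))) := by
    intro B hB
    obtain ⟨x, -, hx⟩ := U.exists_tendsto_of_forall_mem_isCompact isCompact_Icc
      fun i => (hQ i).mem_Icc hB
    exact tendsto_nhds_limUnder ⟨x, hx⟩
  exact ⟨_, .of_tendsto hQ hlim, hlim⟩

variable {𝒮 : Set (Set Ω → ℝ)} {v : Set Ω → ℝ}

lemma bddBelow_image_apply_of_isFinAddProb (h𝒮 : ∀ P ∈ 𝒮, IsFinAddProb P) {B : Set Ω}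
    (hB : MeasurableSet B) : BddBelow ((fun P => P B) '' 𝒮) :=
  ⟨0, by rintro _ ⟨Q, hQ, rfl⟩; exact ((h𝒮 Q hQ).mem_Icc hB).1⟩

lemma LowerProbOf.le_apply (hv : LowerProbOf 𝒮 v) (h𝒮 : ∀ P ∈ 𝒮, IsFinAddProb P)
    {P : Set Ω → ℝ} (hP : P ∈ 𝒮) {B : Set Ω} (hB : MeasurableSet B) : v B ≤ P B := by
  rw [hv B hB]
  exact csInf_le (bddBelow_image_apply_of_isFinAddProb h𝒮 hB) ⟨P, hP, rfl⟩

lemma LowerProbOf.exists_seq_tendsto (hv : LowerProbOf 𝒮 v) (h𝒮 : 𝒮.Nonempty)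
    (hP : ∀ P ∈ 𝒮, IsFinAddProb P) {A : Set Ω} (hA : MeasurableSet A) :
    ∃ Q : ℕ → Set Ω → ℝ, (∀ n, Q n ∈ 𝒮) ∧ Tendsto (fun n => Q n A) atTop (𝓝 (v A)) := by
  obtain ⟨u, -, hu, hu𝒮⟩ :=
    exists_seq_tendsto_sInf (h𝒮.image _) (bddBelow_image_apply_of_isFinAddProb hP hA)
  choose Q hQ𝒮 hQu using hu𝒮
  refine ⟨Q, hQ𝒮, ?_⟩
  simpa only [hQu, hv A hA] using hu

end FinAddProb

theorem stmt0 {Ω : Type*} [MeasurableSpace Ω]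
    (𝒮 : Set (Set Ω → ℝ)) (h𝒮 : 𝒮.Nonempty) (hP : ∀ P ∈ 𝒮, IsFinAddProb P)
    (v : Set Ω → ℝ) (hv : LowerProbOf 𝒮 v) :
    (∃ P : Set Ω → ℝ, IsFinAddProb P ∧ ∀ A : Set Ω, MeasurableSet A → v A ≤ P A) ∧
    ∀ A : Set Ω, MeasurableSet A →
      ∃ P : Set Ω → ℝ,
        (IsFinAddProb P ∧ ∀ B : Set Ω, MeasurableSet B → v B ≤ P B) ∧ P A = v A := by
  refine ⟨?_, fun A hA => ?_⟩
  · obtain ⟨P, hP𝒮⟩ := h𝒮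
    exact ⟨P, hP P hP𝒮, fun A hA => hv.le_apply hP hP𝒮 hA⟩
  obtain ⟨Q, hQ𝒮, hQA⟩ := hv.exists_seq_tendsto h𝒮 hP hA
  obtain ⟨P, hPprob, hlim⟩ :=
    IsFinAddProb.exists_tendsto_ultrafilter (.of atTop) fun n => hP _ (hQ𝒮 n)
  refine ⟨P, ⟨hPprob, fun B hB => ?_⟩, ?_⟩
  · exact ge_of_tendsto (hlim B hB) (.of_forall fun n => hv.le_apply hP (hQ𝒮 n) hB)
  · exact tendsto_nhds_unique (hlim A hA) (hQA.mono_left (Ultrafilter.of_le atTop))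
end

section
/- Let (V,v) be the pair of upper and lower probabilities on a measurable space (Ω,𝓕) generated by a nonempty set 𝒫 of finitely additive probabilities. Then the following are equivalent: (i) V is continuous at ∅ (V(A_n) → 0 whenever A_n ∈ 𝓕 decrease to ∅); (ii) V is continuous; (iii) v is continuous; (iv) v is continuous at Ω (v(A_n) → 1 whenever A_n ∈ 𝓕 increase to Ω). Moreover, any of (i)–(iv) implies that every finitely additive probability P with P(A) ≥ v(A) for all A ∈ 𝓕 is countably additive. -/
open MeasureTheory Filter Topology Set

def CountablyAdditiveProb {Ω : Type*} [MeasurableSpace Ω] (P : Set Ω → ℝ) : Prop :=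
  ∀ A : ℕ → Set Ω, (∀ n, MeasurableSet (A n)) → Pairwise (Function.onFun Disjoint A) →
    HasSum (fun n => P (A n)) (P (⋃ n, A n))


section Helpers
variable {Ω : Type*} [MeasurableSpace Ω]

lemma finadd_nonneg {Q : Set Ω → ℝ} (hQ : IsFinAddProb Q) {A : Set Ω}
    (hA : MeasurableSet A) : 0 ≤ Q A := (hQ.2.2.1 A hA).1

lemma finadd_mono {Q : Set Ω → ℝ} (hQ : IsFinAddProb Q) {A B : Set Ω}
    (hA : MeasurableSet A) (hB : MeasurableSet B) (hAB : A ⊆ B) : Q A ≤ Q B := by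
  have h1 := hQ.2.2.2 A (B \ A) hA (hB.diff hA) disjoint_sdiff_right
  rw [Set.union_diff_cancel hAB] at h1
  have h2 := finadd_nonneg hQ (hB.diff hA)
  linarith

lemma finadd_compl {Q : Set Ω → ℝ} (hQ : IsFinAddProb Q) {A : Set Ω}
    (hA : MeasurableSet A) : Q Aᶜ = 1 - Q A := by
  have h1 := hQ.2.2.2 A Aᶜ hA hA.compl disjoint_compl_right
  rw [Set.union_compl_self, hQ.2.1] at h1
  linarith

lemma finadd_finsum {Q : Set Ω → ℝ} (hQ : IsFinAddProb Q) (A : ℕ → Set Ω)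
    (hmA : ∀ n, MeasurableSet (A n)) (hdisj : Pairwise (Function.onFun Disjoint A)) :
    ∀ N, Q (⋃ n ∈ Finset.range N, A n) = ∑ n ∈ Finset.range N, Q (A n) := by
  intro N
  induction N with
  | zero => simp [hQ.1]
  | succ N ih =>
    have hset : (⋃ n ∈ Finset.range (N+1), A n) = (⋃ n ∈ Finset.range N, A n) ∪ A N := by
      rw [Finset.range_add_one]
      simp [Set.biUnion_insert, Set.union_comm]
    have hmeas : MeasurableSet (⋃ n ∈ Finset.range N, A n) :=
      (Finset.range N).measurableSet_biUnion (fun n _ => hmA n)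
    have hd : Disjoint (⋃ n ∈ Finset.range N, A n) (A N) := by
      rw [Set.disjoint_iUnion₂_left]
      intro i hi
      exact hdisj (by simpa using (Finset.mem_range.mp hi).ne)
    rw [hset, hQ.2.2.2 _ _ hmeas (hmA N) hd, ih, Finset.sum_range_succ]

lemma sInf_one_sub_image {S : Set ℝ} (hne : S.Nonempty) (hbdd : BddAbove S) :
    sInf ((fun x => 1 - x) '' S) = 1 - sSup S := by
  apply le_antisymm
  · have hub : sSup S ≤ 1 - sInf ((fun x => 1 - x) '' S) := by
      apply csSup_le hne
      intro x hx
      have hbb : BddBelow ((fun x => 1 - x) '' S) := by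
        obtain ⟨c, hc⟩ := hbdd
        exact ⟨1 - c, by rintro y ⟨z, hz, rfl⟩; have := hc hz; simp; linarith⟩
      have := csInf_le hbb (Set.mem_image_of_mem _ hx)
      linarith
    linarith
  · apply le_csInf (hne.image _)
    rintro y ⟨x, hx, rfl⟩
    have := le_csSup hbdd hx
    simp only
    linarith

end Helpers

theorem stmt1 {Ω : Type*} [MeasurableSpace Ω]
    (𝒮 : Set (Set Ω → ℝ)) (h𝒮 : 𝒮.Nonempty) (hP : ∀ P ∈ 𝒮, IsFinAddProb P)
    (V v : Set Ω → ℝ) (hV : UpperProbOf 𝒮 V) (hv : LowerProbOf 𝒮 v) :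
    ((ContAtEmpty V ↔ (ContBelow V ∧ ContAbove V)) ∧
     ((ContBelow V ∧ ContAbove V) ↔ (ContBelow v ∧ ContAbove v)) ∧
     ((ContBelow v ∧ ContAbove v) ↔ ContAtUniv v)) ∧
    (ContAtEmpty V →
      ∀ P : Set Ω → ℝ, IsFinAddProb P → (∀ A : Set Ω, MeasurableSet A → v A ≤ P A) →
        CountablyAdditiveProb P) := by
  classical
  -- basic facts
  obtain ⟨P₀, hP₀⟩ := h𝒮
  have himg_ne : ∀ A : Set Ω, ((fun P => P A) '' 𝒮).Nonempty :=
    fun A => ⟨P₀ A, Set.mem_image_of_mem _ hP₀⟩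
  have hbddA : ∀ A : Set Ω, MeasurableSet A → BddAbove ((fun P => P A) '' 𝒮) := by
    intro A hA
    exact ⟨1, by rintro x ⟨P, hPm, rfl⟩; exact ((hP P hPm).2.2.1 A hA).2⟩
  have hbddB : ∀ A : Set Ω, MeasurableSet A → BddBelow ((fun P => P A) '' 𝒮) := by
    intro A hA
    exact ⟨0, by rintro x ⟨P, hPm, rfl⟩; exact ((hP P hPm).2.2.1 A hA).1⟩
  have hPleV : ∀ A : Set Ω, MeasurableSet A → ∀ P ∈ 𝒮, P A ≤ V A := by
    intro A hA P hPm
    rw [hV A hA]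
    exact le_csSup (hbddA A hA) ⟨P, hPm, rfl⟩
  have hVle : ∀ A : Set Ω, MeasurableSet A → ∀ c : ℝ, (∀ P ∈ 𝒮, P A ≤ c) → V A ≤ c := by
    intro A hA c hc
    rw [hV A hA]
    apply csSup_le (himg_ne A)
    rintro x ⟨P, hPm, rfl⟩
    exact hc P hPm
  have hV0 : V ∅ = 0 := by
    apply le_antisymm
    · exact hVle ∅ MeasurableSet.empty 0 (fun P hPm => le_of_eq (hP P hPm).1)
    · have := hPleV ∅ MeasurableSet.empty P₀ hP₀
      rw [(hP P₀ hP₀).1] at this; exact this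
  have hvuniv : v Set.univ = 1 := by
    rw [hv Set.univ MeasurableSet.univ]
    apply le_antisymm
    · exact csInf_le (hbddB _ MeasurableSet.univ)
        ⟨P₀, hP₀, (hP P₀ hP₀).2.1⟩
    · apply le_csInf (himg_ne _)
      rintro x ⟨P, hPm, rfl⟩
      exact le_of_eq (hP P hPm).2.1.symm
  have hVmono : ∀ A B : Set Ω, MeasurableSet A → MeasurableSet B → A ⊆ B → V A ≤ V B := by
    intro A B hA hB hAB
    exact hVle A hA _ (fun P hPm => le_trans (finadd_mono (hP P hPm) hA hB hAB)
      (hPleV B hB P hPm))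
  have hVsub : ∀ A B : Set Ω, MeasurableSet A → MeasurableSet B → Disjoint A B →
      V (A ∪ B) ≤ V A + V B := by
    intro A B hA hB hd
    apply hVle _ (hA.union hB)
    intro P hPm
    rw [(hP P hPm).2.2.2 A B hA hB hd]
    exact add_le_add (hPleV A hA P hPm) (hPleV B hB P hPm)
  -- duality: v A = 1 - V Aᶜ
  have hdual : ∀ A : Set Ω, MeasurableSet A → v A = 1 - V Aᶜ := by
    intro A hA
    rw [hv A hA, hV Aᶜ hA.compl]
    have himg : (fun P => P A) '' 𝒮 = (fun x => 1 - x) '' ((fun P => P Aᶜ) '' 𝒮) := by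
      rw [Set.image_image]
      apply Set.image_congr
      intro P hPm
      have := finadd_compl (hP P hPm) hA
      linarith
    rw [himg, sInf_one_sub_image (himg_ne Aᶜ) (hbddA Aᶜ hA.compl)]
  have hdual' : ∀ A : Set Ω, MeasurableSet A → V A = 1 - v Aᶜ := by
    intro A hA
    have := hdual Aᶜ hA.compl
    rw [compl_compl] at this
    linarith
  -- (i) → ContAbove V
  have h1 : ContAtEmpty V → ContAbove V := by
    intro hce A hmA hanti
    set L := ⋂ n, A n with hL
    have hmL : MeasurableSet L := MeasurableSet.iInter (fun n => hmA n)
    have hdiff : ∀ n, MeasurableSet (A n \ L) := fun n => (hmA n).diff hmL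
    have hanti' : Antitone (fun n => A n \ L) :=
      fun a b hab => Set.diff_subset_diff_left (hanti hab)
    have hempty : (⋂ n, A n \ L) = ∅ := by
      have h : (⋂ n, A n \ L) = (⋂ n, A n) \ L := by
        ext x
        simp only [Set.mem_iInter, Set.mem_diff]
        exact ⟨fun h => ⟨fun n => (h n).1, (h 0).2⟩, fun h n => ⟨h.1 n, h.2⟩⟩
      rw [h, ← hL, Set.diff_self]
    have htend := hce _ hdiff hanti' hempty
    have hlow : ∀ n, V L ≤ V (A n) := fun n =>
      hVmono L (A n) hmL (hmA n) (Set.iInter_subset A n)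
    have hup : ∀ n, V (A n) ≤ V L + V (A n \ L) := by
      intro n
      have hsplit : A n = L ∪ (A n \ L) :=
        (Set.union_diff_cancel (Set.iInter_subset A n)).symm
      calc V (A n) = V (L ∪ (A n \ L)) := by rw [← hsplit]
        _ ≤ V L + V (A n \ L) := hVsub _ _ hmL (hdiff n) disjoint_sdiff_right
    have hub : Tendsto (fun n => V L + V (A n \ L)) atTop (nhds (V L)) := by
      have := htend.const_add (V L)
      simpa using this
    exact tendsto_of_tendsto_of_tendsto_of_le_of_le tendsto_const_nhds hub hlow hup
  -- (i) → ContBelow V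
  have h2 : ContAtEmpty V → ContBelow V := by
    intro hce A hmA hmono
    set U := ⋃ n, A n with hU
    have hmU : MeasurableSet U := MeasurableSet.iUnion (fun n => hmA n)
    have hdiff : ∀ n, MeasurableSet (U \ A n) := fun n => hmU.diff (hmA n)
    have hanti' : Antitone (fun n => U \ A n) :=
      fun a b hab => Set.diff_subset_diff_right (hmono hab)
    have hempty : (⋂ n, U \ A n) = ∅ := by
      have h : (⋂ n, U \ A n) = U \ (⋃ n, A n) := (Set.diff_iUnion U A).symm
      rw [h, ← hU, Set.diff_self]
    have htend := hce _ hdiff hanti' hempty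
    have hup : ∀ n, V (A n) ≤ V U := fun n =>
      hVmono (A n) U (hmA n) hmU (Set.subset_iUnion A n)
    have hlow : ∀ n, V U - V (U \ A n) ≤ V (A n) := by
      intro n
      have hsplit : U = A n ∪ (U \ A n) :=
        (Set.union_diff_cancel (Set.subset_iUnion A n)).symm
      have h := hVsub (A n) (U \ A n) (hmA n) (hdiff n) disjoint_sdiff_right
      rw [← hsplit] at h
      linarith
    have hlb : Tendsto (fun n => V U - V (U \ A n)) atTop (nhds (V U)) := by
      have := htend.const_sub (V U)
      simpa using this
    exact tendsto_of_tendsto_of_tendsto_of_le_of_le hlb tendsto_const_nhds hlow hup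
  -- ContAbove V → (i)
  have h3 : ContAbove V → ContAtEmpty V := by
    intro hca A hmA hanti hempty
    have := hca A hmA hanti
    rwa [hempty, hV0] at this
  -- duality transfers
  have h4 : ContAbove V ↔ ContBelow v := by
    constructor
    · intro hca A hmA hmono
      have hmc : ∀ n, MeasurableSet (A n)ᶜ := fun n => (hmA n).compl
      have hantc : Antitone (fun n => (A n)ᶜ) := fun a b hab =>
        Set.compl_subset_compl.mpr (hmono hab)
      have ht := hca _ hmc hantc
      have heq : (⋂ n, (A n)ᶜ) = (⋃ n, A n)ᶜ := (Set.compl_iUnion A).symm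
      rw [heq] at ht
      have hfun : (fun n => v (A n)) = (fun n => 1 - V (A n)ᶜ) :=
        funext (fun n => hdual (A n) (hmA n))
      rw [hfun, hdual _ (MeasurableSet.iUnion hmA)]
      exact ht.const_sub 1
    · intro hcb A hmA hanti
      have hmc : ∀ n, MeasurableSet (A n)ᶜ := fun n => (hmA n).compl
      have hmonc : Monotone (fun n => (A n)ᶜ) := fun a b hab =>
        Set.compl_subset_compl.mpr (hanti hab)
      have ht := hcb _ hmc hmonc
      have heq : (⋃ n, (A n)ᶜ) = (⋂ n, A n)ᶜ := (Set.compl_iInter A).symm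
      rw [heq] at ht
      have hfun : (fun n => V (A n)) = (fun n => 1 - v (A n)ᶜ) :=
        funext (fun n => hdual' (A n) (hmA n))
      rw [hfun, hdual' _ (MeasurableSet.iInter hmA)]
      exact ht.const_sub 1
  have h5 : ContBelow V ↔ ContAbove v := by
    constructor
    · intro hcb A hmA hanti
      have hmc : ∀ n, MeasurableSet (A n)ᶜ := fun n => (hmA n).compl
      have hmonc : Monotone (fun n => (A n)ᶜ) := fun a b hab =>
        Set.compl_subset_compl.mpr (hanti hab)
      have ht := hcb _ hmc hmonc
      have heq : (⋃ n, (A n)ᶜ) = (⋂ n, A n)ᶜ := (Set.compl_iInter A).symm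
      rw [heq] at ht
      have hfun : (fun n => v (A n)) = (fun n => 1 - V (A n)ᶜ) :=
        funext (fun n => hdual (A n) (hmA n))
      rw [hfun, hdual _ (MeasurableSet.iInter hmA)]
      exact ht.const_sub 1
    · intro hca A hmA hmono
      have hmc : ∀ n, MeasurableSet (A n)ᶜ := fun n => (hmA n).compl
      have hantc : Antitone (fun n => (A n)ᶜ) := fun a b hab =>
        Set.compl_subset_compl.mpr (hmono hab)
      have ht := hca _ hmc hantc
      have heq : (⋂ n, (A n)ᶜ) = (⋃ n, A n)ᶜ := (Set.compl_iUnion A).symm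
      rw [heq] at ht
      have hfun : (fun n => V (A n)) = (fun n => 1 - v (A n)ᶜ) :=
        funext (fun n => hdual' (A n) (hmA n))
      rw [hfun, hdual' _ (MeasurableSet.iUnion hmA)]
      exact ht.const_sub 1
  -- ContBelow v → ContAtUniv v
  have h6 : ContBelow v → ContAtUniv v := by
    intro hcb A hmA hmono huniv
    have := hcb A hmA hmono
    rwa [huniv, hvuniv] at this
  -- ContAtUniv v → ContAtEmpty V
  have h7 : ContAtUniv v → ContAtEmpty V := by
    intro hcu A hmA hanti hempty
    have hmc : ∀ n, MeasurableSet (A n)ᶜ := fun n => (hmA n).compl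
    have hmonc : Monotone (fun n => (A n)ᶜ) := fun a b hab =>
      Set.compl_subset_compl.mpr (hanti hab)
    have huniv : (⋃ n, (A n)ᶜ) = Set.univ := by
      rw [← Set.compl_iInter, hempty, Set.compl_empty]
    have ht := hcu _ hmc hmonc huniv
    have hfun : (fun n => V (A n)) = (fun n => 1 - v (A n)ᶜ) :=
      funext (fun n => hdual' (A n) (hmA n))
    rw [hfun]
    have := ht.const_sub 1
    simpa using this
  refine ⟨⟨⟨fun h => ⟨h2 h, h1 h⟩, fun h => h3 h.2⟩,
    ⟨fun h => ⟨h4.mp h.2, h5.mp h.1⟩, fun h => ⟨h5.mpr h.2, h4.mpr h.1⟩⟩,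
    ⟨fun h => h6 h.1, fun h => ⟨h4.mp (h1 (h7 h)), h5.mp (h2 (h7 h))⟩⟩⟩, ?_⟩
  -- last part
  intro hce Q hQ hvQ A hmA hdisj
  have hQleV : ∀ B : Set Ω, MeasurableSet B → Q B ≤ V B := by
    intro B hB
    have h1 := hvQ Bᶜ hB.compl
    have h2 := hdual Bᶜ hB.compl
    have h3 := finadd_compl hQ hB
    rw [compl_compl] at h2
    linarith
  set B : ℕ → Set Ω := fun N => ⋃ n ∈ Set.Ici N, A n with hB
  have hmB : ∀ N, MeasurableSet (B N) :=
    fun N => MeasurableSet.biUnion (Set.to_countable _) (fun n _ => hmA n)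
  have hantiB : Antitone B := by
    intro a b hab
    exact Set.biUnion_subset_biUnion_left (Set.Ici_subset_Ici.mpr hab)
  have hBempty : (⋂ N, B N) = ∅ := by
    ext x
    simp only [Set.mem_iInter, Set.mem_empty_iff_false, iff_false]
    intro hx
    obtain ⟨n0, _, hx0⟩ := Set.mem_iUnion₂.mp (hx 0)
    obtain ⟨n1, hn1, hx1⟩ := Set.mem_iUnion₂.mp (hx (n0 + 1))
    have hne : n0 ≠ n1 := by
      intro h; rw [h] at hn1; exact absurd (Set.mem_Ici.mp hn1) (by omega)
    exact Set.disjoint_left.mp (hdisj hne) hx0 hx1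
  have hVB := hce B hmB hantiB hBempty
  have hQB : Tendsto (fun N => Q (B N)) atTop (nhds 0) := by
    apply tendsto_of_tendsto_of_tendsto_of_le_of_le tendsto_const_nhds hVB
    · exact fun N => finadd_nonneg hQ (hmB N)
    · exact fun N => hQleV (B N) (hmB N)
  have hmU : MeasurableSet (⋃ n, A n) := MeasurableSet.iUnion hmA
  have hsplit : ∀ N, Q (⋃ n, A n) = (∑ n ∈ Finset.range N, Q (A n)) + Q (B N) := by
    intro N
    have hset : (⋃ n, A n) = (⋃ n ∈ Finset.range N, A n) ∪ B N := by
      ext x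
      simp only [hB, Set.mem_iUnion, Set.mem_union, Finset.mem_range, Set.mem_Ici,
        Set.mem_iUnion₂, exists_prop]
      constructor
      · rintro ⟨n, hn⟩
        rcases lt_or_ge n N with h | h
        · exact Or.inl ⟨n, h, hn⟩
        · exact Or.inr ⟨n, h, hn⟩
      · rintro (⟨n, _, hn⟩ | ⟨n, _, hn⟩) <;> exact ⟨n, hn⟩
    have hmf : MeasurableSet (⋃ n ∈ Finset.range N, A n) :=
      (Finset.range N).measurableSet_biUnion (fun n _ => hmA n)
    have hd : Disjoint (⋃ n ∈ Finset.range N, A n) (B N) := by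
      rw [Set.disjoint_iUnion₂_left]
      intro i hi
      rw [hB]
      simp only
      rw [Set.disjoint_iUnion₂_right]
      intro j hj
      have hij : i ≠ j := by
        have h1 := Finset.mem_range.mp hi
        have h2 := Set.mem_Ici.mp hj
        omega
      exact hdisj hij
    rw [hset, hQ.2.2.2 _ _ hmf (hmB N) hd, finadd_finsum hQ A hmA hdisj N]
  have hpartsum : Tendsto (fun N => ∑ n ∈ Finset.range N, Q (A n)) atTop
      (nhds (Q (⋃ n, A n))) := by
    have heq : (fun N => ∑ n ∈ Finset.range N, Q (A n))
        = (fun N => Q (⋃ n, A n) - Q (B N)) := by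
      funext N
      have := hsplit N
      linarith
    rw [heq]
    have := hQB.const_sub (Q (⋃ n, A n))
    simpa using this
  rw [hasSum_iff_tendsto_nat_of_nonneg (fun n => finadd_nonneg hQ (hmA n))]
  exact hpartsum
end

section
/- (Kolmogorov 0–1 law for capacities) Let μ be a continuous capacity on a measurable space (Ω,𝓕) and let {Y_n}_{n∈ℕ} be a sequence of real-valued random variables on Ω such that for every n ∈ ℕ the σ-algebras σ(Y_k : k ≤ n) and σ(Y_k : k ≥ n+1) are independent with respect to μ. Let 𝒯 = ⋂_{n=1}^∞ σ(Y_k : k ≥ n) be the tail σ-algebra. Then for every A ∈ 𝒯 both of the following hold: (i) μ(A) = 0 or μ(A) = 1; (ii) μ(A) = 0 or μ(Aᶜ) = 0. -/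
open MeasureTheory Filter Topology Set

/-!
A tail event `A` lies in the σ-algebra generated by the algebra of "finite past" events
`⋃ n, σ(Y_k : k ≤ n)`, and is independent of each of its members. Additivity is not available for
a capacity, so the Dynkin π-λ argument is replaced by the monotone class theorem: the events
`B` with `μ (B ∩ A) = μ B * μ A` form a monotone class because `μ` is continuous from below and
above. Hence `A` is independent of itself, so `μ A = μ A ^ 2` and `0 = μ (A ∩ Aᶜ) = μ A * μ Aᶜ`.
-/

section

variable {α : Type*}

inductive GenerateMonotoneClass (𝒜 : Set (Set α)) : Set α → Prop
  | basic {s : Set α} : s ∈ 𝒜 → GenerateMonotoneClass 𝒜 s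
  | monotone_iUnion {f : ℕ → Set α} : Monotone f → (∀ n, GenerateMonotoneClass 𝒜 (f n)) →
      GenerateMonotoneClass 𝒜 (⋃ n, f n)
  | antitone_iInter {f : ℕ → Set α} : Antitone f → (∀ n, GenerateMonotoneClass 𝒜 (f n)) →
      GenerateMonotoneClass 𝒜 (⋂ n, f n)

namespace GenerateMonotoneClass

variable {𝒜 : Set (Set α)}

theorem compl (h𝒜 : ∀ ⦃s⦄, s ∈ 𝒜 → sᶜ ∈ 𝒜) {s : Set α} (hs : GenerateMonotoneClass 𝒜 s) :
    GenerateMonotoneClass 𝒜 sᶜ := by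
  induction hs with
  | basic h => exact basic (h𝒜 h)
  | monotone_iUnion hf _ ih =>
    rw [compl_iUnion]
    exact antitone_iInter (fun _ _ hab => compl_subset_compl.2 (hf hab)) ih
  | antitone_iInter hf _ ih =>
    rw [compl_iInter]
    exact monotone_iUnion (fun _ _ hab => compl_subset_compl.2 (hf hab)) ih

theorem union_of_mem (h𝒜 : ∀ ⦃s t⦄, s ∈ 𝒜 → t ∈ 𝒜 → s ∪ t ∈ 𝒜) {s t : Set α}
    (hs : GenerateMonotoneClass 𝒜 s) (ht : t ∈ 𝒜) : GenerateMonotoneClass 𝒜 (s ∪ t) := by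
  induction hs with
  | basic h => exact basic (h𝒜 h ht)
  | monotone_iUnion hf _ ih =>
    rw [iUnion_union]
    exact monotone_iUnion (fun _ _ hab => union_subset_union_left t (hf hab)) ih
  | antitone_iInter hf _ ih =>
    rw [iInter_union]
    exact antitone_iInter (fun _ _ hab => union_subset_union_left t (hf hab)) ih

theorem union (h𝒜 : ∀ ⦃s t⦄, s ∈ 𝒜 → t ∈ 𝒜 → s ∪ t ∈ 𝒜) {s t : Set α}
    (hs : GenerateMonotoneClass 𝒜 s) (ht : GenerateMonotoneClass 𝒜 t) :
    GenerateMonotoneClass 𝒜 (s ∪ t) := by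
  induction ht with
  | basic h => exact hs.union_of_mem h𝒜 h
  | monotone_iUnion hf _ ih =>
    rw [union_iUnion]
    exact monotone_iUnion (fun _ _ hab => union_subset_union_right s (hf hab)) ih
  | antitone_iInter hf _ ih =>
    rw [union_iInter]
    exact antitone_iInter (fun _ _ hab => union_subset_union_right s (hf hab)) ih

theorem iUnion (h𝒜 : ∀ ⦃s t⦄, s ∈ 𝒜 → t ∈ 𝒜 → s ∪ t ∈ 𝒜) {f : ℕ → Set α}
    (hf : ∀ n, GenerateMonotoneClass 𝒜 (f n)) : GenerateMonotoneClass 𝒜 (⋃ n, f n) := by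
  have hacc : ∀ n, GenerateMonotoneClass 𝒜 (accumulate f n) := by
    intro n
    induction n with
    | zero => simpa only [accumulate_zero_nat] using hf 0
    | succ n ih => simpa only [accumulate_succ] using ih.union h𝒜 (hf (n + 1))
  rw [← iUnion_accumulate]
  exact monotone_iUnion monotone_accumulate hacc

end GenerateMonotoneClass

/-- The monotone class theorem, as an induction principle. -/
theorem MeasureTheory.IsSetAlgebra.induction_on_generateFrom {𝒜 : Set (Set α)}
    (h𝒜 : IsSetAlgebra 𝒜) {p : Set α → Prop} (basic : ∀ s ∈ 𝒜, p s)
    (monotone_iUnion : ∀ f : ℕ → Set α, Monotone f → (∀ n, p (f n)) → p (⋃ n, f n))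
    (antitone_iInter : ∀ f : ℕ → Set α, Antitone f → (∀ n, p (f n)) → p (⋂ n, f n))
    {s : Set α} (hs : MeasurableSet[MeasurableSpace.generateFrom 𝒜] s) : p s := by
  let m : MeasurableSpace α :=
    { MeasurableSet' := GenerateMonotoneClass 𝒜
      measurableSet_empty := .basic h𝒜.empty_mem
      measurableSet_compl := fun _ ht => ht.compl h𝒜.compl_mem
      measurableSet_iUnion := fun _ hf => GenerateMonotoneClass.iUnion h𝒜.union_mem hf }
  have hgen : GenerateMonotoneClass 𝒜 s :=
    MeasurableSpace.generateFrom_le (m := m) (fun _ ht => .basic ht) s hs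
  clear hs
  induction hgen with
  | basic h => exact basic _ h
  | monotone_iUnion hf _ ih => exact monotone_iUnion _ hf ih
  | antitone_iInter hf _ ih => exact antitone_iInter _ hf ih

theorem isSetAlgebra_iUnion_measurableSet {ι : Type*} [Nonempty ι] {m : ι → MeasurableSpace α}
    (hm : Directed (· ≤ ·) m) : IsSetAlgebra (⋃ i, {s | MeasurableSet[m i] s}) where
  empty_mem := mem_iUnion.2 ⟨Classical.arbitrary ι, @MeasurableSet.empty _ (m _)⟩
  compl_mem := by
    simp only [mem_iUnion, mem_ofPred_eq]
    exact fun _ ⟨i, hs⟩ => ⟨i, hs.compl⟩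
  union_mem := by
    simp only [mem_iUnion, mem_ofPred_eq]
    rintro s t ⟨i, hs⟩ ⟨j, ht⟩
    obtain ⟨k, hik, hjk⟩ := hm i j
    exact ⟨k, (hik s hs).union (hjk t ht)⟩

namespace IndepSigmaWrt

variable {μ : Set α → ℝ}

theorem mono {m₁ m₂ m₁' m₂' : MeasurableSpace α} (h : IndepSigmaWrt μ m₁ m₂)
    (h₁ : m₁' ≤ m₁) (h₂ : m₂' ≤ m₂) : IndepSigmaWrt μ m₁' m₂' :=
  fun A B hA hB => h A B (h₁ A hA) (h₂ B hB)

theorem iSup_of_directed {ι : Type*} [Nonempty ι] [mα : MeasurableSpace α]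
    (hb : ContBelow μ) (ha : ContAbove μ) {m : ι → MeasurableSpace α} {m' : MeasurableSpace α}
    (hm : Directed (· ≤ ·) m)
    (hmα : ∀ i, m i ≤ mα) (hm' : m' ≤ mα) (h : ∀ i, IndepSigmaWrt μ (m i) m') :
    IndepSigmaWrt μ (⨆ i, m i) m' := by
  intro A T hA hT
  rw [← MeasurableSpace.generateFrom_iUnion_measurableSet] at hA
  have hTα : MeasurableSet[mα] T := hm' T hT
  suffices MeasurableSet[mα] A ∧ μ (A ∩ T) = μ A * μ T from this.2
  refine (isSetAlgebra_iUnion_measurableSet hm).induction_on_generateFrom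
    (p := fun A => MeasurableSet[mα] A ∧ μ (A ∩ T) = μ A * μ T) ?_ ?_ ?_ hA
  · simp only [mem_iUnion, mem_ofPred_eq]
    exact fun s ⟨i, hs⟩ => ⟨hmα i s hs, h i s T hs hT⟩
  · intro f hf ih
    have hfα n := (ih n).1
    refine ⟨.iUnion hfα, tendsto_nhds_unique ?_ ((hb f hfα hf).mul_const (μ T))⟩
    simpa only [(ih _).2, iUnion_inter] using
      hb (fun n => f n ∩ T) (fun n => (hfα n).inter hTα)
        fun _ _ hab => inter_subset_inter_left T (hf hab)
  · intro f hf ih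
    have hfα n := (ih n).1
    refine ⟨.iInter hfα, tendsto_nhds_unique ?_ ((ha f hfα hf).mul_const (μ T))⟩
    simpa only [(ih _).2, iInter_inter] using
      ha (fun n => f n ∩ T) (fun n => (hfα n).inter hTα)
        fun _ _ hab => inter_subset_inter_left T (hf hab)

theorem zero_or_one_of_self {m : MeasurableSpace α} (h : IndepSigmaWrt μ m m) (h0 : μ ∅ = 0)
    {A : Set α} (hA : MeasurableSet[m] A) : (μ A = 0 ∨ μ A = 1) ∧ (μ A = 0 ∨ μ Aᶜ = 0) := by
  have hsq : μ A = μ A * μ A := by simpa only [inter_self] using h A A hA hA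
  have hcompl : μ A * μ Aᶜ = 0 := by
    rw [← h A Aᶜ hA hA.compl, inter_compl_self, h0]
  refine ⟨?_, mul_eq_zero.1 hcompl⟩
  rcases mul_eq_zero.1 (show μ A * (μ A - 1) = 0 by linarith) with h | h
  · exact .inl h
  · exact .inr (by linarith)

end IndepSigmaWrt

end

theorem stmt2 {Ω : Type*} [mΩ : MeasurableSpace Ω]
    (μ : Set Ω → ℝ) (hcap : IsCapacity μ) (hb : ContBelow μ) (ha : ContAbove μ)
    (Y : ℕ → Ω → ℝ) (hY : ∀ n, Measurable (Y n))
    (hIndep : ∀ n : ℕ,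
      IndepSigmaWrt μ
        (⨆ k, ⨆ _ : k ≤ n, MeasurableSpace.comap (Y k) inferInstance)
        (⨆ k, ⨆ _ : n + 1 ≤ k, MeasurableSpace.comap (Y k) inferInstance)) :
    ∀ A : Set Ω,
      MeasurableSet[⨅ n : ℕ, ⨆ k, ⨆ _ : n ≤ k, MeasurableSpace.comap (Y k) inferInstance] A →
        (μ A = 0 ∨ μ A = 1) ∧ (μ A = 0 ∨ μ Aᶜ = 0) := by
  intro A hA
  set σY : ℕ → MeasurableSpace Ω := fun k => MeasurableSpace.comap (Y k) inferInstance
  set past : ℕ → MeasurableSpace Ω := fun n => ⨆ k, ⨆ _ : k ≤ n, σY k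
  set future : ℕ → MeasurableSpace Ω := fun n => ⨆ k, ⨆ _ : n ≤ k, σY k
  have hσY k : σY k ≤ past k := le_iSup₂_of_le k le_rfl le_rfl
  have hpast : Monotone past := fun n m hnm => iSup₂_mono' fun k hk => ⟨k, hk.trans hnm, le_rfl⟩
  have hpast_le n : past n ≤ mΩ := iSup₂_le fun k _ => (hY k).comap_le
  have htail_le n : (⨅ n, future n) ≤ future n := iInf_le future n
  have htail_le_past : (⨅ n, future n) ≤ ⨆ n, past n :=
    (htail_le 0).trans (iSup₂_le fun k _ => (hσY k).trans (le_iSup past k))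
  have hpast_tail n : IndepSigmaWrt μ (past n) (⨅ n, future n) :=
    (hIndep n).mono le_rfl (htail_le (n + 1))
  have htail_self : IndepSigmaWrt μ (⨅ n, future n) (⨅ n, future n) :=
    (IndepSigmaWrt.iSup_of_directed hb ha hpast.directed_le hpast_le
      (htail_le_past.trans (iSup_le hpast_le)) hpast_tail).mono htail_le_past le_rfl
  exact htail_self.zero_or_one_of_self hcap.1 hA
end

section
/- Let μ be a concave capacity on a measurable space (Ω,𝓕) that is continuous at ∅ (μ(A_n) → 0 whenever A_n ∈ 𝓕 decrease to ∅). Then: (i) there exists a nonempty set 𝒫 of countably additive probability measures on (Ω,𝓕) such that μ(A) = sup_{P∈𝒫} P(A) for all A ∈ 𝓕, and moreover for every measurable ξ : Ω → ℝ whose Choquet integral ∫_Ω |ξ| dμ is finite, the Choquet integral satisfies ∫_Ω ξ dμ = sup_{P∈𝒫} ∫_Ω ξ dP (the right-hand integrals being ordinary Lebesgue integrals); (ii) μ is continuous. -/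
open MeasureTheory Filter Topology Set

/-!
For an ordered partition `E₀, E₁, …, E_{L-1}` of `Ω` into measurable sets, giving `Eᵢ` the
marginal contribution `μ(E₀ ∪ … ∪ Eᵢ) - μ(E₀ ∪ … ∪ Eᵢ₋₁)` defines an additive content which agrees
with `μ` on the unions of initial segments and, by submodularity, lies below `μ` on every
measurable set. Any finite family of measurable sets can be refined by such a partition while a
given finite chain is kept among the initial-segment unions, so an ultrafilter limit over finite
families gives, for every chain `𝒞` of measurable sets, a finitely additive probability `P ≤ μ`
with `P = μ` on `𝒞`; continuity of `μ` at `∅` passes to `P`, which is therefore a measure.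

The core `{Q ≤ μ}` thus attains `μ A` (take `𝒞 = {A}`) and the Choquet integral of `ξ` (take `𝒞`
the level sets `{ξ ≥ t}`, the only sets the Choquet integral sees), while `∫ ξ dQ ≤ ∫ ξ dμ` for
every `Q` in the core by the layer-cake formula. Continuity from below and above follows from
continuity at `∅` and subadditivity.
-/

namespace IsCapacity

variable {Ω : Type*} [MeasurableSpace Ω] {μ : Set Ω → ℝ}

lemma mono (hμ : IsCapacity μ) {A B : Set Ω} (hA : MeasurableSet A) (hB : MeasurableSet B)
    (hAB : A ⊆ B) : μ A ≤ μ B :=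
  hμ.2.2 A B hA hB hAB

lemma nonneg (hμ : IsCapacity μ) {A : Set Ω} (hA : MeasurableSet A) : 0 ≤ μ A :=
  hμ.1 ▸ hμ.mono MeasurableSet.empty hA (empty_subset A)

lemma le_one (hμ : IsCapacity μ) {A : Set Ω} (hA : MeasurableSet A) : μ A ≤ 1 :=
  hμ.2.1 ▸ hμ.mono hA MeasurableSet.univ (subset_univ A)

end IsCapacity

section Submodular

variable {Ω : Type*} [MeasurableSpace Ω]

def IsSubmodular (μ : Set Ω → ℝ) : Prop :=
  ∀ A B : Set Ω, MeasurableSet A → MeasurableSet B → μ (A ∪ B) + μ (A ∩ B) ≤ μ A + μ B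

variable {μ : Set Ω → ℝ}

lemma IsSubmodular.union_le (hsub : IsSubmodular μ) (hμ : IsCapacity μ) {A B : Set Ω}
    (hA : MeasurableSet A) (hB : MeasurableSet B) : μ (A ∪ B) ≤ μ A + μ B := by
  linarith [hsub A B hA hB, hμ.nonneg (hA.inter hB)]

lemma IsSubmodular.one_le_add_compl (hsub : IsSubmodular μ) (hμ : IsCapacity μ) {A : Set Ω}
    (hA : MeasurableSet A) : 1 ≤ μ A + μ Aᶜ := by
  simpa [hμ.2.1] using hsub.union_le hμ hA hA.compl

lemma IsSubmodular.contBelow (hsub : IsSubmodular μ) (hμ : IsCapacity μ) (hcont : ContAtEmpty μ) :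
    ContBelow μ := by
  intro A hA hmono
  have hU : MeasurableSet (⋃ n, A n) := .iUnion hA
  have htail : Tendsto (fun n => μ ((⋃ i, A i) \ A n)) atTop (𝓝 0) :=
    hcont _ (fun n => hU.diff (hA n)) (fun _ _ h => sdiff_subset_sdiff_right (hmono h))
      (by rw [← sdiff_iUnion, sdiff_self])
  refine tendsto_of_tendsto_of_tendsto_of_le_of_le (by simpa using tendsto_const_nhds.sub htail)
    tendsto_const_nhds (fun n => ?_) fun n => hμ.mono (hA n) hU (subset_iUnion A n)
  have := hsub.union_le hμ (hA n) (hU.diff (hA n))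
  rw [union_sdiff_cancel (subset_iUnion A n)] at this
  simp only
  linarith

lemma IsSubmodular.contAbove (hsub : IsSubmodular μ) (hμ : IsCapacity μ) (hcont : ContAtEmpty μ) :
    ContAbove μ := by
  intro A hA hanti
  have hI : MeasurableSet (⋂ n, A n) := .iInter hA
  have htail : Tendsto (fun n => μ (A n \ ⋂ i, A i)) atTop (𝓝 0) :=
    hcont _ (fun n => (hA n).diff hI) (fun _ _ h => sdiff_subset_sdiff_left (hanti h))
      (eq_empty_of_forall_notMem fun _ hx =>
        (mem_iInter.1 hx 0).2 (mem_iInter.2 fun i => (mem_iInter.1 hx i).1))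
  refine tendsto_of_tendsto_of_tendsto_of_le_of_le tendsto_const_nhds
    (by simpa using tendsto_const_nhds.add htail) (fun n => hμ.mono hI (hA n) (iInter_subset A n))
    fun n => ?_
  have := hsub.union_le hμ hI ((hA n).diff hI)
  rwa [union_sdiff_cancel (iInter_subset A n)] at this

end Submodular

section Partitions

open Function

section PrefixUnion

variable {Ω : Type*}

def prefixUnion (E : ℕ → Set Ω) (n : ℕ) : Set Ω := ⋃ i < n, E i

variable {E : ℕ → Set Ω}

@[simp]
lemma prefixUnion_zero : prefixUnion E 0 = ∅ := by simp [prefixUnion]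

lemma prefixUnion_succ (n : ℕ) : prefixUnion E (n + 1) = prefixUnion E n ∪ E n :=
  biUnion_lt_succ E n

lemma subset_prefixUnion {i n : ℕ} (h : i < n) : E i ⊆ prefixUnion E n :=
  subset_biUnion_of_mem (u := E) h

lemma prefixUnion_mono : Monotone (prefixUnion E) := fun _ _ h =>
  biUnion_subset_biUnion_left fun _ hi => lt_of_lt_of_le hi h

lemma prefixUnion_subset_prefixUnion {E' : ℕ → Set Ω} (h : ∀ i, E i ⊆ E' i) (n : ℕ) :
    prefixUnion E n ⊆ prefixUnion E' n :=
  biUnion_mono subset_rfl fun i _ => h i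

lemma disjoint_prefixUnion (hE : Pairwise (Disjoint on E)) {i n : ℕ} (h : n ≤ i) :
    Disjoint (E i) (prefixUnion E n) :=
  disjoint_iUnion₂_right.2 fun _ hj => hE (by omega)

lemma MeasurableSet.prefixUnion [MeasurableSpace Ω] (hE : ∀ i, MeasurableSet (E i)) (n : ℕ) :
    MeasurableSet (prefixUnion E n) :=
  .biUnion (to_countable _) fun i _ => hE i

end PrefixUnion

section SplitSeq

variable {Ω : Type*} (E : ℕ → Set Ω) (L : ℕ) (B : Set Ω)

-- The parts inside `B` come first, so that every prefix union comparable with `B` stays one.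
def splitSeq (i : ℕ) : Set Ω := if i < L then E i ∩ B else E (i - L) \ B

variable {E L B}

lemma prefixUnion_splitSeq_of_le {n : ℕ} (hn : n ≤ L) :
    prefixUnion (splitSeq E L B) n = prefixUnion E n ∩ B := by
  induction n with
  | zero => simp
  | succ n ih =>
    rw [prefixUnion_succ, prefixUnion_succ, ih (by omega), splitSeq, if_pos (by omega),
      union_inter_distrib_right]

lemma prefixUnion_splitSeq_add (hL : prefixUnion E L = univ) (n : ℕ) :
    prefixUnion (splitSeq E L B) (L + n) = B ∪ prefixUnion E n := by
  induction n with
  | zero => simp [prefixUnion_splitSeq_of_le le_rfl, hL]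
  | succ n ih =>
    rw [← add_assoc, prefixUnion_succ, prefixUnion_succ, ih, splitSeq, if_neg (by omega),
      Nat.add_sub_cancel_left]
    ext
    simp only [mem_union, Set.mem_sdiff]
    tauto

lemma splitSeq_subset_or (i : ℕ) : splitSeq E L B i ⊆ B ∨ splitSeq E L B i ⊆ Bᶜ := by
  unfold splitSeq
  split_ifs
  · exact .inl inter_subset_right
  · exact .inr fun _ h => h.2

lemma splitSeq_subset_or_of {A : Set Ω} (hA : ∀ j, E j ⊆ A ∨ E j ⊆ Aᶜ) (i : ℕ) :
    splitSeq E L B i ⊆ A ∨ splitSeq E L B i ⊆ Aᶜ := by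
  have : ∃ j, splitSeq E L B i ⊆ E j := by
    unfold splitSeq
    split_ifs
    exacts [⟨i, inter_subset_left⟩, ⟨i - L, sdiff_subset⟩]
  obtain ⟨j, hj⟩ := this
  exact (hA j).imp hj.trans hj.trans

lemma pairwise_disjoint_splitSeq (hE : Pairwise (Disjoint on E)) :
    Pairwise (Disjoint on splitSeq E L B) := by
  intro i j hij
  simp only [onFun, splitSeq]
  split_ifs with hi hj hj
  · exact (hE hij).mono inter_subset_left inter_subset_left
  · exact disjoint_left.2 fun _ h h' => h'.2 h.2
  · exact disjoint_left.2 fun _ h h' => h.2 h'.2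
  · exact (hE (by omega)).mono sdiff_subset sdiff_subset

end SplitSeq

structure OrderedPartition (Ω : Type*) [MeasurableSpace Ω] where
  part : ℕ → Set Ω
  length : ℕ
  measurableSet_part : ∀ i, MeasurableSet (part i)
  pairwise_disjoint : Pairwise (Disjoint on part)
  prefixUnion_length : prefixUnion part length = univ

namespace OrderedPartition

variable {Ω : Type*} [MeasurableSpace Ω]

def single : OrderedPartition Ω where
  part i := if i = 0 then univ else ∅
  length := 1
  measurableSet_part i := by split_ifs <;> simp
  pairwise_disjoint i j hij := by
    simp only [onFun]
    split_ifs <;> simp_all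
  prefixUnion_length := by simp [prefixUnion_succ]

def split (P : OrderedPartition Ω) (B : Set Ω) (hB : MeasurableSet B) : OrderedPartition Ω where
  part := splitSeq P.part P.length B
  length := 2 * P.length
  measurableSet_part i := by
    unfold splitSeq
    split_ifs
    exacts [(P.measurableSet_part i).inter hB, (P.measurableSet_part _).diff hB]
  pairwise_disjoint := pairwise_disjoint_splitSeq P.pairwise_disjoint
  prefixUnion_length := by
    rw [two_mul, prefixUnion_splitSeq_add P.prefixUnion_length, P.prefixUnion_length, union_univ]

lemma exists_refining (F D : Finset (Set Ω)) (hF : ∀ A ∈ F, MeasurableSet A)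
    (hD : ∀ C ∈ D, MeasurableSet C) (hDc : IsChain (· ⊆ ·) (D : Set (Set Ω))) :
    ∃ P : OrderedPartition Ω, (∀ A ∈ F, ∀ i, P.part i ⊆ A ∨ P.part i ⊆ Aᶜ) ∧
      ∀ C ∈ D, ∃ n ≤ P.length, prefixUnion P.part n = C := by
  classical
  induction D using Finset.induction_on with
  | empty =>
    induction F using Finset.induction_on with
    | empty => exact ⟨single, by simp, by simp⟩
    | insert A F _ ih =>
      obtain ⟨P, hPF, -⟩ := ih fun B hB => hF B (Finset.mem_insert_of_mem hB)
      refine ⟨P.split A (hF A (Finset.mem_insert_self A F)), ?_, by simp⟩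
      intro B hB
      rcases Finset.mem_insert.1 hB with rfl | hB
      · exact splitSeq_subset_or
      · exact splitSeq_subset_or_of (hPF B hB)
  | insert C D _ ih =>
    obtain ⟨P, hPF, hPD⟩ := ih (fun B hB => hD B (Finset.mem_insert_of_mem hB))
      (hDc.mono (by simp))
    have hC : C ∈ insert C D := Finset.mem_insert_self C D
    refine ⟨P.split C (hD C hC), fun A hA => splitSeq_subset_or_of (hPF A hA), ?_⟩
    intro B hB
    rcases Finset.mem_insert.1 hB with rfl | hB
    · refine ⟨P.length, show P.length ≤ 2 * P.length by omega, ?_⟩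
      simp [split, prefixUnion_splitSeq_of_le le_rfl, P.prefixUnion_length]
    · obtain ⟨n, hn, rfl⟩ := hPD B hB
      rcases hDc.total (Finset.mem_coe.2 hC) (Finset.mem_coe.2 (Finset.mem_insert_of_mem hB))
        with h | h
      · refine ⟨P.length + n, show P.length + n ≤ 2 * P.length by omega, ?_⟩
        simp [split, prefixUnion_splitSeq_add P.prefixUnion_length, h]
      · refine ⟨n, show n ≤ 2 * P.length by omega, ?_⟩
        simp [split, prefixUnion_splitSeq_of_le hn, h]

variable (P : OrderedPartition Ω) {μ : Set Ω → ℝ}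

def weight (μ : Set Ω → ℝ) (i : ℕ) : ℝ :=
  μ (prefixUnion P.part (i + 1)) - μ (prefixUnion P.part i)

open Classical in
noncomputable def content (μ : Set Ω → ℝ) (B : Set Ω) : ℝ :=
  ∑ i ∈ Finset.range P.length, if P.part i ⊆ B then P.weight μ i else 0

lemma measurableSet_prefixUnion (n : ℕ) : MeasurableSet (prefixUnion P.part n) :=
  .prefixUnion P.measurableSet_part n

lemma weight_nonneg (hμ : IsCapacity μ) (i : ℕ) : 0 ≤ P.weight μ i :=
  sub_nonneg.2 <| hμ.mono (P.measurableSet_prefixUnion i) (P.measurableSet_prefixUnion (i + 1))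
    (prefixUnion_mono i.le_succ)

lemma weight_eq_zero {i : ℕ} (h : P.part i = ∅) : P.weight μ i = 0 := by
  simp [weight, prefixUnion_succ, h]

lemma sum_weight (hμ : IsCapacity μ) (n : ℕ) :
    ∑ i ∈ Finset.range n, P.weight μ i = μ (prefixUnion P.part n) := by
  simp only [weight]
  rw [Finset.sum_range_sub (fun i => μ (prefixUnion P.part i)), prefixUnion_zero, hμ.1, sub_zero]

lemma content_nonneg (hμ : IsCapacity μ) (B : Set Ω) : 0 ≤ P.content μ B :=
  Finset.sum_nonneg fun i _ => by
    split_ifs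
    exacts [P.weight_nonneg hμ i, le_rfl]

lemma content_mono (hμ : IsCapacity μ) {A B : Set Ω} (hAB : A ⊆ B) :
    P.content μ A ≤ P.content μ B :=
  Finset.sum_le_sum fun i _ => by
    split_ifs with hA hB
    exacts [le_rfl, absurd (hA.trans hAB) hB, P.weight_nonneg hμ i, le_rfl]

lemma content_univ (hμ : IsCapacity μ) : P.content μ univ = 1 := by
  simp [content, P.sum_weight hμ, P.prefixUnion_length, hμ.2.1]

lemma content_prefixUnion (hμ : IsCapacity μ) {n : ℕ} (hn : n ≤ P.length) :
    P.content μ (prefixUnion P.part n) = μ (prefixUnion P.part n) := by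
  classical
  rw [content, ← Finset.sum_range_add_sum_Ico _ hn, ← P.sum_weight hμ n]
  have hhead : ∀ i ∈ Finset.range n, P.part i ⊆ prefixUnion P.part n := fun i hi =>
    subset_prefixUnion (Finset.mem_range.1 hi)
  have htail : ∀ i ∈ Finset.Ico n P.length,
      (if P.part i ⊆ prefixUnion P.part n then P.weight μ i else 0) = 0 := by
    intro i hi
    split_ifs with h
    · exact P.weight_eq_zero <|
        (disjoint_prefixUnion P.pairwise_disjoint (Finset.mem_Ico.1 hi).1).eq_bot_of_le h
    · rfl
  rw [Finset.sum_eq_zero htail, add_zero]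
  exact Finset.sum_congr rfl fun i hi => if_pos (hhead i hi)

lemma content_union {A B : Set Ω} (hA : ∀ i, P.part i ⊆ A ∨ P.part i ⊆ Aᶜ)
    (hAB : Disjoint A B) : P.content μ (A ∪ B) = P.content μ A + P.content μ B := by
  rw [content, content, content, ← Finset.sum_add_distrib]
  refine Finset.sum_congr rfl fun i _ => ?_
  rcases (P.part i).eq_empty_or_nonempty with h | ⟨x, hx⟩
  · simp [P.weight_eq_zero h]
  rcases hA i with hiA | hiA
  · have hiB : ¬ P.part i ⊆ B := fun h => disjoint_left.1 hAB (hiA hx) (h hx)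
    simp [hiA, subset_union_of_subset_left hiA, hiB]
  · have hiA' : ¬ P.part i ⊆ A := fun h => hiA hx (h hx)
    rw [if_neg hiA', zero_add]
    by_cases hiB : P.part i ⊆ B
    · rw [if_pos hiB, if_pos (hiB.trans subset_union_right)]
    · rw [if_neg hiB, if_neg fun h => hiB fun _ hy => (h hy).resolve_left (hiA hy)]

lemma content_le (hμ : IsCapacity μ) (hsub : IsSubmodular μ) {B : Set Ω} (hB : MeasurableSet B) :
    P.content μ B ≤ μ B := by
  classical
  let inner : ℕ → Set Ω := prefixUnion fun i => if P.part i ⊆ B then P.part i else ∅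
  have hinner_pre (n : ℕ) : inner n ⊆ prefixUnion P.part n :=
    prefixUnion_subset_prefixUnion (fun i => by split_ifs <;> simp) n
  have hinner_meas (n : ℕ) : MeasurableSet (inner n) :=
    .prefixUnion (fun i => by split_ifs; exacts [P.measurableSet_part i, .empty]) n
  have hinner_sub (n : ℕ) : inner n ⊆ B :=
    iUnion₂_subset fun i _ => by dsimp only; split_ifs with h; exacts [h, empty_subset B]
  suffices key : ∀ n, ∑ i ∈ Finset.range n, (if P.part i ⊆ B then P.weight μ i else 0)
      ≤ μ (inner n) from
    (key P.length).trans (hμ.mono (hinner_meas _) hB (hinner_sub _))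
  intro n
  induction n with
  | zero => simp [inner, hμ.1]
  | succ n ih =>
    rw [Finset.sum_range_succ]
    by_cases h : P.part n ⊆ B
    · -- submodularity for the first `n` parts and `inner (n + 1)`: their union consists of the
      -- first `n + 1` parts and their intersection is `inner n`
      have hsucc : inner (n + 1) = inner n ∪ P.part n := by simp [inner, prefixUnion_succ, h]
      have hunion : prefixUnion P.part n ∪ (inner n ∪ P.part n) = prefixUnion P.part (n + 1) := by
        rw [prefixUnion_succ, ← union_assoc, union_eq_self_of_subset_right (hinner_pre n)]
      have hinter : prefixUnion P.part n ∩ (inner n ∪ P.part n) = inner n := by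
        rw [inter_union_distrib_left, inter_eq_self_of_subset_right (hinner_pre n),
          (disjoint_prefixUnion P.pairwise_disjoint le_rfl).symm.inter_eq, union_empty]
      have := hsub _ _ (P.measurableSet_prefixUnion n)
        ((hinner_meas n).union (P.measurableSet_part n))
      rw [hunion, hinter, ← hsucc] at this
      rw [if_pos h, weight]
      linarith
    · have hsucc : inner (n + 1) = inner n := by simp [inner, prefixUnion_succ, h]
      rw [if_neg h, add_zero, hsucc]
      exact ih

end OrderedPartition

end Partitions

section Core

variable {Ω : Type*} [MeasurableSpace Ω] {μ : Set Ω → ℝ}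

lemma exists_content_of_finset (hμ : IsCapacity μ) (hsub : IsSubmodular μ)
    (F D : Finset (Set Ω)) (hF : ∀ A ∈ F, MeasurableSet A) (hD : ∀ C ∈ D, MeasurableSet C)
    (hDc : IsChain (· ⊆ ·) (D : Set (Set Ω))) :
    ∃ ν : Set Ω → ℝ, (∀ B, ν B ∈ Icc 0 1) ∧ ν ∅ = 0 ∧ ν univ = 1 ∧
      (∀ B, MeasurableSet B → ν B ≤ μ B) ∧
      (∀ A ∈ F, ∀ B, Disjoint A B → ν (A ∪ B) = ν A + ν B) ∧ ∀ C ∈ D, ν C = μ C := by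
  obtain ⟨P, hPF, hPD⟩ := OrderedPartition.exists_refining F D hF hD hDc
  refine ⟨P.content μ, fun B => ⟨P.content_nonneg hμ B, ?_⟩, ?_, P.content_univ hμ,
    fun B hB => P.content_le hμ hsub hB, fun A hA B => P.content_union (hPF A hA), ?_⟩
  · exact (P.content_mono hμ (subset_univ B)).trans_eq (P.content_univ hμ)
  · simpa [hμ.1] using P.content_prefixUnion hμ (Nat.zero_le _)
  · intro C hC
    obtain ⟨n, hn, rfl⟩ := hPD C hC
    exact P.content_prefixUnion hμ hn

lemma exists_isFinAddProb_of_isChain (hμ : IsCapacity μ) (hsub : IsSubmodular μ)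
    {𝒞 : Set (Set Ω)} (h𝒞 : IsChain (· ⊆ ·) 𝒞) (h𝒞m : ∀ C ∈ 𝒞, MeasurableSet C) :
    ∃ P : Set Ω → ℝ, IsFinAddProb P ∧ (∀ A, MeasurableSet A → P A ≤ μ A) ∧
      ∀ C ∈ 𝒞, P C = μ C := by
  classical
  choose ν hν01 hν0 hν1 hνμ hνadd hν𝒞 using fun F : Finset (Set Ω) =>
    exists_content_of_finset hμ hsub (F.filter MeasurableSet) (F.filter (· ∈ 𝒞))
      (fun A hA => (Finset.mem_filter.1 hA).2) (fun C hC => h𝒞m C (Finset.mem_filter.1 hC).2)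
      (h𝒞.mono fun C hC => (Finset.mem_filter.1 hC).2)
  -- refining `atTop`, so that any given set eventually belongs to `F`
  let U : Ultrafilter (Finset (Set Ω)) := .of atTop
  obtain ⟨P, -, hP⟩ := (isCompact_univ_pi fun _ : Set Ω => isCompact_Icc (a := (0 : ℝ)) (b := 1))
    |>.ultrafilter_le_nhds' (U.map ν)
      (Ultrafilter.mem_map.2 <| univ_mem' fun F => mem_univ_pi.2 (hν01 F))
  have hlim (B : Set Ω) : Tendsto (fun F => ν F B) U (𝓝 (P B)) := tendsto_pi_nhds.1 hP B
  have hev (A : Set Ω) : ∀ᶠ F in (U : Filter (Finset (Set Ω))), A ∈ F :=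
    Ultrafilter.of_le atTop <| (eventually_ge_atTop {A}).mono fun F hF =>
      hF (Finset.mem_singleton_self A)
  have hconst {B : Set Ω} {c : ℝ} (h : ∀ᶠ F in (U : Filter (Finset (Set Ω))), ν F B = c) :
      P B = c :=
    tendsto_nhds_unique (hlim B) (tendsto_const_nhds.congr' (h.mono fun _ h => h.symm))
  refine ⟨P, ⟨hconst (.of_forall hν0), hconst (.of_forall hν1),
    fun B _ => isClosed_Icc.mem_of_tendsto (hlim B) (.of_forall fun F => hν01 F B), ?_⟩,
    fun A hA => le_of_tendsto' (hlim A) fun F => hνμ F A hA, fun C hC => hconst ?_⟩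
  · intro A B hA _ hAB
    refine tendsto_nhds_unique (hlim (A ∪ B)) (((hlim A).add (hlim B)).congr' ?_)
    exact (hev A).mono fun F hF => (hνadd F A (Finset.mem_filter.2 ⟨hF, hA⟩) B hAB).symm
  · exact (hev C).mono fun F hF => hν𝒞 F C (Finset.mem_filter.2 ⟨hF, hC⟩)

lemma ContAtEmpty.of_le {P : Set Ω → ℝ} (hμ : ContAtEmpty μ) (hP : ∀ A, MeasurableSet A → 0 ≤ P A)
    (hPμ : ∀ A, MeasurableSet A → P A ≤ μ A) : ContAtEmpty P := fun A hA hanti hempty =>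
  squeeze_zero (fun n => hP _ (hA n)) (fun n => hPμ _ (hA n)) (hμ A hA hanti hempty)

lemma IsFinAddProb.exists_measure {P : Set Ω → ℝ} (hP : IsFinAddProb P) (hcont : ContAtEmpty P) :
    ∃ Q : Measure Ω, IsProbabilityMeasure Q ∧ ∀ A, MeasurableSet A → Q.real A = P A := by
  obtain ⟨hP0, hP1, hP01, hPadd⟩ := hP
  have hR : IsSetRing {s : Set Ω | MeasurableSet s} :=
    ⟨.empty, fun _ _ => .union, fun _ _ => .diff⟩
  let m : AddContent ENNReal {s : Set Ω | MeasurableSet s} :=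
    hR.addContent_of_union (fun s => ENNReal.ofReal (P s)) (by simp [hP0])
      fun hs ht hst => by
        rw [hPadd _ _ hs ht hst, ENNReal.ofReal_add (hP01 _ hs).1 (hP01 _ ht).1]
  have hm (s : Set Ω) : m s = ENNReal.ofReal (P s) := rfl
  have hσ := addContent_iUnion_eq_sum_of_tendsto_zero hR m (fun _ _ => ENNReal.ofReal_ne_top)
    fun s hs hanti hempty => by
      simpa only [hm, ENNReal.ofReal_zero] using ENNReal.tendsto_ofReal (hcont s hs hanti hempty)
  let Q := Measure.ofMeasurable (fun s _ => m s) (addContent_empty)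
    fun f hf hd => hσ hf (.iUnion hf) hd
  have hQ (A : Set Ω) (hA : MeasurableSet A) : Q A = ENNReal.ofReal (P A) :=
    (Measure.ofMeasurable_apply A hA).trans (hm A)
  refine ⟨Q, ⟨by simp [hQ _ .univ, hP1]⟩, fun A hA => ?_⟩
  rw [measureReal_def, hQ A hA, ENNReal.toReal_ofReal (hP01 A hA).1]

def core (μ : Set Ω → ℝ) : Set (Measure Ω) :=
  {Q | IsProbabilityMeasure Q ∧ ∀ A, MeasurableSet A → Q.real A ≤ μ A}

lemma exists_mem_core_of_isChain (hμ : IsCapacity μ) (hsub : IsSubmodular μ)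
    (hcont : ContAtEmpty μ) {𝒞 : Set (Set Ω)} (h𝒞 : IsChain (· ⊆ ·) 𝒞)
    (h𝒞m : ∀ C ∈ 𝒞, MeasurableSet C) : ∃ Q ∈ core μ, ∀ C ∈ 𝒞, Q.real C = μ C := by
  obtain ⟨P, hP, hPμ, hP𝒞⟩ := exists_isFinAddProb_of_isChain hμ hsub h𝒞 h𝒞m
  obtain ⟨Q, hQ, hQP⟩ := hP.exists_measure (hcont.of_le (fun A hA => (hP.2.2.1 A hA).1) hPμ)
  exact ⟨Q, ⟨hQ, fun A hA => hQP A hA ▸ hPμ A hA⟩, fun C hC => (hQP C (h𝒞m C hC)).trans (hP𝒞 C hC)⟩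

lemma isGreatest_measureReal_core (hμ : IsCapacity μ) (hsub : IsSubmodular μ)
    (hcont : ContAtEmpty μ) {A : Set Ω} (hA : MeasurableSet A) :
    IsGreatest ((fun Q : Measure Ω => Q.real A) '' core μ) (μ A) := by
  obtain ⟨Q, hQ, hQA⟩ := exists_mem_core_of_isChain hμ hsub hcont IsChain.singleton
    (by simpa using hA)
  exact ⟨⟨Q, hQ, hQA A rfl⟩, by rintro _ ⟨Q', hQ', rfl⟩; exact hQ'.2 A hA⟩

end Core

section ChoquetIntegrable

variable {Ω : Type*} {ξ : Ω → ℝ}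

def ChoquetIntegrable (ν : Set Ω → ℝ) (ξ : Ω → ℝ) : Prop :=
  IntegrableOn (fun t => ν {ω | ξ ω ≥ t}) (Ioi 0) ∧
    IntegrableOn (fun t => ν {ω | ξ ω ≥ t} - 1) (Iio 0)

lemma choquet_mono {ν ν' : Set Ω → ℝ} (hν : ChoquetIntegrable ν ξ) (hν' : ChoquetIntegrable ν' ξ)
    (h : ∀ t, ν {ω | ξ ω ≥ t} ≤ ν' {ω | ξ ω ≥ t}) : choquet ν ξ ≤ choquet ν' ξ :=
  add_le_add (setIntegral_mono hν.1 hν'.1 h) (setIntegral_mono hν.2 hν'.2 fun t => by simp [h t])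

end ChoquetIntegrable

section Choquet

variable {Ω : Type*} [MeasurableSpace Ω] {ξ : Ω → ℝ}

lemma choquetIntegrable_of_le {ν μ : Set Ω → ℝ} (hν : IsCapacity ν)
    (hν1 : ∀ A, MeasurableSet A → 1 ≤ ν A + ν Aᶜ) (hνμ : ∀ A, MeasurableSet A → ν A ≤ μ A)
    (hξ : Measurable ξ) (hint : IntegrableOn (fun t => μ {ω | |ξ ω| ≥ t}) (Ioi 0)) :
    ChoquetIntegrable ν ξ := by
  have hlev (t : ℝ) : MeasurableSet {ω | ξ ω ≥ t} := hξ measurableSet_Ici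
  have habs (t : ℝ) : MeasurableSet {ω | |ξ ω| ≥ t} := hξ.abs measurableSet_Ici
  have hanti : Antitone fun t => ν {ω | ξ ω ≥ t} := fun s t hst =>
    hν.mono (hlev t) (hlev s) fun ω (h : t ≤ ξ ω) => hst.trans h
  have hrefl : IntegrableOn (fun t => μ {ω | |ξ ω| ≥ -t}) (Iio 0) := by
    have he : MeasurableEmbedding fun t : ℝ => -t := (Homeomorph.neg ℝ).measurableEmbedding
    rw [← Measure.map_neg_eq_self (volume : Measure ℝ)] at hint
    simpa [Function.comp_def] using he.integrableOn_map_iff.1 hint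
  constructor
  · refine hint.mono' hanti.measurable.aestronglyMeasurable <|
      (ae_restrict_mem measurableSet_Ioi).mono fun t (ht : 0 < t) => ?_
    rw [Real.norm_eq_abs, abs_of_nonneg (hν.nonneg (hlev t))]
    exact (hν.mono (hlev t) (habs t) fun ω (h : t ≤ ξ ω) => h.trans (le_abs_self _)).trans
      (hνμ _ (habs t))
  · refine hrefl.mono' (hanti.measurable.sub_const 1).aestronglyMeasurable <|
      (ae_restrict_mem measurableSet_Iio).mono fun t (ht : t < 0) => ?_
    have hcompl : {ω | ξ ω ≥ t}ᶜ ⊆ {ω | |ξ ω| ≥ -t} := fun ω (h : ¬ t ≤ ξ ω) => by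
      show -t ≤ |ξ ω|
      linarith [neg_abs_le (ξ ω)]
    rw [Real.norm_eq_abs, abs_of_nonpos (by linarith [hν.le_one (hlev t)])]
    linarith [hν1 _ (hlev t), hν.mono (hlev t).compl (habs _) hcompl, hνμ _ (habs (-t))]

lemma isCapacity_measureReal (Q : Measure Ω) [IsProbabilityMeasure Q] : IsCapacity Q.real :=
  ⟨measureReal_empty, probReal_univ, fun _ _ _ _ h => measureReal_mono h⟩

lemma integral_eq_choquet (Q : Measure Ω) [IsProbabilityMeasure Q] (hξ : Measurable ξ)
    (hint : Integrable ξ Q) : ∫ ω, ξ ω ∂Q = choquet Q.real ξ := by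
  have hpos : ∫ ω, max (ξ ω) 0 ∂Q = ∫ t in Ioi 0, Q.real {ω | ξ ω ≥ t} := by
    rw [hint.pos_part.integral_eq_integral_meas_le (.of_forall fun ω => le_max_right _ _)]
    refine setIntegral_congr_fun measurableSet_Ioi fun t (ht : 0 < t) => ?_
    simp [ht.not_ge]
  have hneg : ∫ ω, max (-ξ ω) 0 ∂Q = -∫ t in Iio 0, (Q.real {ω | ξ ω ≥ t} - 1) := by
    have hrefl : ∫ t in Iio 0, (Q.real {ω | ξ ω ≥ t} - 1)
        = ∫ t in Ioi 0, (Q.real {ω | ξ ω ≥ -t} - 1) := by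
      simpa [integral_Iic_eq_integral_Iio] using
        (integral_comp_neg_Ioi 0 fun t => Q.real {ω | ξ ω ≥ t} - 1).symm
    rw [hint.neg_part.integral_eq_integral_meas_lt (.of_forall fun ω => le_max_right _ _), hrefl,
      ← integral_neg]
    refine setIntegral_congr_fun measurableSet_Ioi fun t (ht : 0 < t) => ?_
    have : {ω | t < max (-ξ ω) 0} = {ω | ξ ω ≥ -t}ᶜ := by
      ext ω
      simp [ht.not_gt, lt_neg]
    have hmeas : MeasurableSet {ω | ξ ω ≥ -t} := hξ measurableSet_Ici
    rw [this, probReal_compl_eq_one_sub hmeas, neg_sub]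
  calc ∫ ω, ξ ω ∂Q = ∫ ω, max (ξ ω) 0 ∂Q - ∫ ω, max (-ξ ω) 0 ∂Q := by
        rw [← integral_sub hint.pos_part hint.neg_part]
        simp only [max_zero_sub_max_neg_zero_eq_self]
    _ = choquet Q.real ξ := by rw [hpos, hneg, choquet, sub_neg_eq_add]

lemma integrable_of_measureReal_le {μ : Set Ω → ℝ} (Q : Measure Ω) [IsProbabilityMeasure Q]
    (hξ : Measurable ξ) (hint : IntegrableOn (fun t => μ {ω | |ξ ω| ≥ t}) (Ioi 0))
    (hQμ : ∀ A, MeasurableSet A → Q.real A ≤ μ A) : Integrable ξ Q := by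
  refine ⟨hξ.aestronglyMeasurable, ?_⟩
  rw [hasFiniteIntegral_iff_norm]
  simp_rw [Real.norm_eq_abs]
  rw [lintegral_eq_lintegral_meas_le Q (.of_forall fun _ => abs_nonneg _) hξ.abs.aemeasurable]
  have hHnonneg : ∀ᵐ t ∂(volume.restrict (Ioi (0 : ℝ))), 0 ≤ μ {ω | |ξ ω| ≥ t} :=
    (ae_restrict_mem measurableSet_Ioi).mono fun t _ =>
      measureReal_nonneg.trans (hQμ _ (hξ.abs measurableSet_Ici))
  calc ∫⁻ t in Ioi 0, Q {ω | t ≤ |ξ ω|}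
      ≤ ∫⁻ t in Ioi 0, ENNReal.ofReal (μ {ω | |ξ ω| ≥ t}) := lintegral_mono fun t => by
        rw [← ofReal_measureReal]
        exact ENNReal.ofReal_le_ofReal (hQμ _ (hξ.abs measurableSet_Ici))
    _ < ⊤ := by
      rw [← ofReal_integral_eq_lintegral_ofReal hint hHnonneg]
      exact ENNReal.ofReal_lt_top

variable {μ : Set Ω → ℝ}

lemma isGreatest_integral_core (hμ : IsCapacity μ) (hsub : IsSubmodular μ)
    (hcont : ContAtEmpty μ) (hξ : Measurable ξ)
    (hint : IntegrableOn (fun t => μ {ω | |ξ ω| ≥ t}) (Ioi 0)) :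
    IsGreatest ((fun Q : Measure Ω => ∫ ω, ξ ω ∂Q) '' core μ) (choquet μ ξ) := by
  have hlev (t : ℝ) : MeasurableSet {ω | ξ ω ≥ t} := hξ measurableSet_Ici
  have hcore {Q : Measure Ω} (hQ : Q ∈ core μ) :
      ∫ ω, ξ ω ∂Q = choquet Q.real ξ ∧ ChoquetIntegrable Q.real ξ := by
    obtain ⟨_, hQμ⟩ := hQ
    exact ⟨integral_eq_choquet Q hξ (integrable_of_measureReal_le Q hξ hint hQμ),
      choquetIntegrable_of_le (isCapacity_measureReal Q)
        (fun A hA => (probReal_add_probReal_compl hA).ge) hQμ hξ hint⟩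
  obtain ⟨Q, hQ, hQμ⟩ := exists_mem_core_of_isChain hμ hsub hcont
    (Antitone.isChain_range (f := fun t => {ω | ξ ω ≥ t})
      fun s t (hst : s ≤ t) ω (h : t ≤ ξ ω) => hst.trans h)
    (by rintro _ ⟨t, rfl⟩; exact hlev t)
  refine ⟨⟨Q, hQ, ?_⟩, ?_⟩
  · -- the Choquet integral only sees the level sets, on which `Q` and `μ` agree
    simp only [(hcore hQ).1, choquet, hQμ _ (mem_range_self _)]
  · rintro _ ⟨P, hP, rfl⟩
    dsimp only
    rw [(hcore hP).1]
    have hμint : ChoquetIntegrable μ ξ := choquetIntegrable_of_le hμ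
      (fun A hA => hsub.one_le_add_compl hμ hA) (fun _ _ => le_rfl) hξ hint
    exact choquet_mono (hcore hP).2 hμint fun t => hP.2 _ (hlev t)

end Choquet

theorem stmt3 {Ω : Type*} [MeasurableSpace Ω]
    (μ : Set Ω → ℝ) (hcap : IsCapacity μ)
    (hconc : ∀ A B : Set Ω, MeasurableSet A → MeasurableSet B →
      μ (A ∪ B) + μ (A ∩ B) ≤ μ A + μ B)
    (hcont : ContAtEmpty μ) :
    (∃ 𝒮 : Set (Measure Ω), 𝒮.Nonempty ∧ (∀ P ∈ 𝒮, IsProbabilityMeasure P) ∧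
      (∀ A : Set Ω, MeasurableSet A →
        μ A = sSup ((fun P : Measure Ω => (P A).toReal) '' 𝒮)) ∧
      (∀ ξ : Ω → ℝ, Measurable ξ →
        MeasureTheory.IntegrableOn (fun t => μ {ω | |ξ ω| ≥ t}) (Set.Ioi (0:ℝ)) →
        choquet μ ξ = sSup ((fun P : Measure Ω => ∫ ω, ξ ω ∂P) '' 𝒮))) ∧
    (ContBelow μ ∧ ContAbove μ) := by
  refine ⟨⟨core μ, ?_, fun Q hQ => hQ.1, fun A hA => ?_, fun ξ hξ hint => ?_⟩,
    IsSubmodular.contBelow hconc hcap hcont, IsSubmodular.contAbove hconc hcap hcont⟩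
  · exact (isGreatest_measureReal_core hcap hconc hcont .univ).nonempty.of_image
  · exact (isGreatest_measureReal_core hcap hconc hcont hA).csSup_eq.symm
  · exact (isGreatest_integral_core hcap hconc hcont hξ hint).csSup_eq.symm
end

section
/- (Dominated convergence for the Choquet integral) Let μ be a subadditive capacity on a measurable space (Ω,𝓕) that is continuous from above, and let {X_n}_{n∈ℕ}, X, Y, Z be measurable real-valued random variables with Y(ω) ≤ X_n(ω) ≤ Z(ω) for all n and ω, and with the Choquet integrals ∫_Ω Y dμ and ∫_Ω Z dμ finite. If μ̄({ω : lim_{n→∞} X_n(ω) = X(ω)}) = 1, where μ̄ is the conjugate capacity of μ, then lim_{n→∞} ∫_Ω X_n dμ = ∫_Ω X dμ. -/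
open MeasureTheory Filter Topology Set

theorem stmt4 {Ω : Type*} [MeasurableSpace Ω]
    (μ : Set Ω → ℝ) (hcap : IsCapacity μ)
    (hsub : ∀ A B : Set Ω, MeasurableSet A → MeasurableSet B → Disjoint A B →
      μ (A ∪ B) ≤ μ A + μ B)
    (ha : ContAbove μ)
    (X : ℕ → Ω → ℝ) (Xlim Y Z : Ω → ℝ)
    (hX : ∀ n, Measurable (X n)) (hXlim : Measurable Xlim)
    (hYm : Measurable Y) (hZm : Measurable Z)
    (hbound : ∀ (n : ℕ) (ω : Ω), Y ω ≤ X n ω ∧ X n ω ≤ Z ω)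
    (hYfin : MeasureTheory.IntegrableOn (fun t => μ {ω | Y ω ≥ t}) (Set.Ioi (0:ℝ)) ∧
      MeasureTheory.IntegrableOn (fun t => μ {ω | Y ω ≥ t} - 1) (Set.Iio (0:ℝ)))
    (hZfin : MeasureTheory.IntegrableOn (fun t => μ {ω | Z ω ≥ t}) (Set.Ioi (0:ℝ)) ∧
      MeasureTheory.IntegrableOn (fun t => μ {ω | Z ω ≥ t} - 1) (Set.Iio (0:ℝ)))
    (hconv : conjCap μ {ω | Filter.Tendsto (fun n => X n ω) Filter.atTop (nhds (Xlim ω))} = 1) :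
    Filter.Tendsto (fun n => choquet μ (X n)) Filter.atTop (nhds (choquet μ Xlim)) := by
  obtain ⟨hμ0, hμuniv, hmono⟩ := hcap
  have hμnonneg : ∀ A : Set Ω, MeasurableSet A → 0 ≤ μ A := fun A hA =>
    hμ0 ▸ hmono ∅ A MeasurableSet.empty hA (empty_subset A)
  have hμle1 : ∀ A : Set Ω, MeasurableSet A → μ A ≤ 1 := fun A hA =>
    hμuniv ▸ hmono A univ hA MeasurableSet.univ (subset_univ A)
  have hsub' : ∀ A B : Set Ω, MeasurableSet A → MeasurableSet B → μ (A ∪ B) ≤ μ A + μ B := by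
    intro A B hA hB
    have h1 : A ∪ B = (A \ B) ∪ B := (Set.diff_union_self).symm
    rw [h1]
    calc μ ((A \ B) ∪ B) ≤ μ (A \ B) + μ B :=
          hsub _ _ (hA.diff hB) hB disjoint_sdiff_left
      _ ≤ μ A + μ B := by
          have := hmono (A \ B) A (hA.diff hB) hA diff_subset
          linarith
  set Dc : Set Ω := {ω | Tendsto (fun n => X n ω) atTop (𝓝 (Xlim ω))} with hDcdef
  have hDcm : MeasurableSet Dc := measurableSet_tendsto_fun hX hXlim
  have hDm : MeasurableSet Dcᶜ := hDcm.compl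
  have hμD : μ Dcᶜ = 0 := by
    have h := hconv
    simp only [conjCap] at h
    linarith
  have hSm : ∀ (t : ℝ) (n : ℕ), MeasurableSet {ω | X n ω ≥ t} := fun t n =>
    measurableSet_le measurable_const (hX n)
  have hTm : ∀ t : ℝ, MeasurableSet {ω | Xlim ω ≥ t} := fun t =>
    measurableSet_le measurable_const hXlim
  have hYsm : ∀ t : ℝ, MeasurableSet {ω | Y ω ≥ t} := fun t =>
    measurableSet_le measurable_const hYm
  have hZsm : ∀ t : ℝ, MeasurableSet {ω | Z ω ≥ t} := fun t =>
    measurableSet_le measurable_const hZm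
  set g : ℝ → ℝ := fun s => μ {ω | Xlim ω ≥ s} with hgdef
  have hganti : Antitone g := by
    intro a b hab
    exact hmono _ _ (hTm b) (hTm a) (fun ω hω => le_trans hab hω)
  -- upper estimate
  have upper : ∀ t : ℝ, ∀ ε > (0:ℝ), ∀ᶠ n in atTop, μ {ω | X n ω ≥ t} ≤ g t + ε := by
    intro t ε hε
    set C : ℕ → Set Ω := fun N => ⋃ m, {ω | X (N + m) ω ≥ t} with hCdef
    have hCm : ∀ N, MeasurableSet (C N) := fun N => MeasurableSet.iUnion fun m => hSm t (N + m)
    have hCanti : Antitone C := by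
      intro N M hNM ω hω
      simp only [hCdef, mem_iUnion, mem_setOf_eq] at hω ⊢
      obtain ⟨m, hm⟩ := hω
      exact ⟨M + m - N, by rwa [show N + (M + m - N) = M + m by omega]⟩
    have hlim := ha C hCm hCanti
    have hsub1 : (⋂ N, C N) ⊆ {ω | Xlim ω ≥ t} ∪ Dcᶜ := by
      intro ω hω
      by_cases hωD : ω ∈ Dc
      · left
        have hfreq : ∃ᶠ n in atTop, X n ω ∈ Ici t := by
          rw [frequently_atTop]
          intro N
          have hh := mem_iInter.1 hω N
          simp only [hCdef, mem_iUnion, mem_setOf_eq] at hh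
          obtain ⟨m, hm⟩ := hh
          exact ⟨N + m, Nat.le_add_right _ _, hm⟩
        exact isClosed_Ici.mem_of_frequently_of_tendsto hfreq hωD
      · exact Or.inr hωD
    have hle : μ (⋂ N, C N) ≤ g t := by
      calc μ (⋂ N, C N) ≤ μ ({ω | Xlim ω ≥ t} ∪ Dcᶜ) :=
            hmono _ _ (MeasurableSet.iInter hCm) ((hTm t).union hDm) hsub1
        _ ≤ μ {ω | Xlim ω ≥ t} + μ Dcᶜ := hsub' _ _ (hTm t) hDm
        _ = g t := by rw [hμD]; ring
    have hev : ∀ᶠ N in atTop, μ (C N) < μ (⋂ N, C N) + ε :=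
      hlim.eventually (gt_mem_nhds (by linarith))
    filter_upwards [hev] with n hn
    have hsub2 : {ω | X n ω ≥ t} ⊆ C n := by
      intro ω hω
      simp only [hCdef, mem_iUnion, mem_setOf_eq]
      exact ⟨0, by simpa using hω⟩
    have := hmono _ _ (hSm t n) (hCm n) hsub2
    linarith
  -- lower estimate
  have lower : ∀ t s : ℝ, t < s → ∀ ε > (0:ℝ), ∀ᶠ n in atTop,
      g s - ε ≤ μ {ω | X n ω ≥ t} := by
    intro t s hts ε hε
    set E : ℕ → Set Ω := fun N => ⋂ m, {ω | X (N + m) ω ≥ t} with hEdef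
    have hEm : ∀ N, MeasurableSet (E N) := fun N => MeasurableSet.iInter fun m => hSm t (N + m)
    have hEmono : Monotone E := by
      intro N M hNM ω hω
      simp only [hEdef, mem_iInter, mem_setOf_eq] at hω ⊢
      intro m
      have := hω (M + m - N)
      rwa [show N + (M + m - N) = M + m by omega] at this
    set B : ℕ → Set Ω := fun N => {ω | Xlim ω ≥ s} \ E N with hBdef
    have hBm : ∀ N, MeasurableSet (B N) := fun N => (hTm s).diff (hEm N)
    have hBanti : Antitone B := fun N M h => diff_subset_diff_right (hEmono h)
    have hlim := ha B hBm hBanti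
    have hsub1 : (⋂ N, B N) ⊆ Dcᶜ := by
      intro ω hω
      by_contra hωD
      have hωc : ω ∈ Dc := not_not.1 hωD
      have hXs : Xlim ω ≥ s := (mem_iInter.1 hω 0).1
      have hev : ∀ᶠ n in atTop, X n ω ≥ t :=
        hωc.eventually (eventually_ge_nhds (lt_of_lt_of_le hts hXs))
      obtain ⟨N, hN⟩ := eventually_atTop.1 hev
      exact (mem_iInter.1 hω N).2 (mem_iInter.2 fun m => hN (N + m) (Nat.le_add_right _ _))
    have hint0 : μ (⋂ N, B N) = 0 := by
      have h1 : μ (⋂ N, B N) ≤ μ Dcᶜ :=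
        hmono _ _ (MeasurableSet.iInter hBm) hDm hsub1
      have h2 := hμnonneg _ (MeasurableSet.iInter hBm)
      rw [hμD] at h1
      linarith
    rw [hint0] at hlim
    have hev : ∀ᶠ N in atTop, μ (B N) < ε := hlim.eventually (gt_mem_nhds hε)
    obtain ⟨N, hN⟩ := eventually_atTop.1 hev
    rw [eventually_atTop]
    refine ⟨N, fun n hn => ?_⟩
    have hdecomp : {ω | Xlim ω ≥ s} ⊆ B N ∪ ({ω | Xlim ω ≥ s} ∩ E N) := by
      intro ω hω
      by_cases h : ω ∈ E N
      · exact Or.inr ⟨hω, h⟩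
      · exact Or.inl ⟨hω, h⟩
    have h1 : μ {ω | Xlim ω ≥ s} ≤ μ (B N) + μ ({ω | Xlim ω ≥ s} ∩ E N) :=
      le_trans (hmono _ _ (hTm s) ((hBm N).union ((hTm s).inter (hEm N))) hdecomp)
        (hsub' _ _ (hBm N) ((hTm s).inter (hEm N)))
    have hEsub : ({ω | Xlim ω ≥ s} ∩ E N) ⊆ {ω | X n ω ≥ t} := by
      intro ω hω
      have := mem_iInter.1 hω.2 (n - N)
      rwa [show N + (n - N) = n by omega] at this
    have h2 : μ ({ω | Xlim ω ≥ s} ∩ E N) ≤ μ {ω | X n ω ≥ t} :=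
      hmono _ _ ((hTm s).inter (hEm N)) (hSm t n) hEsub
    have h3 := hN N le_rfl
    simp only [hgdef]
    linarith
  -- pointwise convergence at continuity points
  have key : ∀ t : ℝ, ContinuousAt g t →
      Tendsto (fun n => μ {ω | X n ω ≥ t}) atTop (𝓝 (g t)) := by
    intro t hg
    rw [Metric.tendsto_atTop]
    intro ε hε
    have h1 := upper t (ε / 2) (by linarith)
    have h2 : ∀ᶠ s in 𝓝[>] t, g t - ε / 2 < g s :=
      hg.continuousWithinAt.eventually (lt_mem_nhds (by linarith))
    obtain ⟨s, hgs, hst⟩ := (h2.and self_mem_nhdsWithin).exists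
    have h3 := lower t s hst (ε / 2) (by linarith)
    obtain ⟨N₁, hN₁⟩ := eventually_atTop.1 h1
    obtain ⟨N₂, hN₂⟩ := eventually_atTop.1 h3
    refine ⟨max N₁ N₂, fun n hn => ?_⟩
    have ha1 := hN₁ n (le_trans (le_max_left _ _) hn)
    have ha2 := hN₂ n (le_trans (le_max_right _ _) hn)
    have hgle : g s ≤ g t := hganti (le_of_lt hst)
    rw [Real.dist_eq, abs_lt]
    constructor <;> linarith
  -- a.e. convergence
  have hae : ∀ᵐ t ∂(volume : Measure ℝ),
      Tendsto (fun n => μ {ω | X n ω ≥ t}) atTop (𝓝 (μ {ω | Xlim ω ≥ t})) := by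
    have hK : (volume : Measure ℝ) {x | ¬ContinuousAt g x} = 0 :=
      (hganti.countable_not_continuousAt).measure_zero _
    rw [ae_iff]
    refine measure_mono_null (fun t ht => ?_) hK
    simp only [mem_setOf_eq] at ht ⊢
    exact fun hc => ht (key t hc)
  have hμSanti : ∀ n : ℕ, Antitone (fun t => μ {ω | X n ω ≥ t}) := by
    intro n a b hab
    exact hmono _ _ (hSm b n) (hSm a n) (fun ω hω => le_trans hab hω)
  -- convergence of the Ioi integrals
  have hIoi : Tendsto (fun n => ∫ t in Ioi (0:ℝ), μ {ω | X n ω ≥ t}) atTop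
      (𝓝 (∫ t in Ioi (0:ℝ), μ {ω | Xlim ω ≥ t})) := by
    refine tendsto_integral_of_dominated_convergence (fun t => μ {ω | Z ω ≥ t})
      (fun n => ((hμSanti n).measurable).aestronglyMeasurable) hZfin.1
      (fun n => Eventually.of_forall fun t => ?_) (ae_restrict_of_ae hae)
    rw [Real.norm_eq_abs, abs_of_nonneg (hμnonneg _ (hSm t n))]
    exact hmono _ _ (hSm t n) (hZsm t) (fun ω hω => le_trans hω (hbound n ω).2)
  -- convergence of the Iio integrals
  have hIio : Tendsto (fun n => ∫ t in Iio (0:ℝ), (μ {ω | X n ω ≥ t} - 1)) atTop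
      (𝓝 (∫ t in Iio (0:ℝ), (μ {ω | Xlim ω ≥ t} - 1))) := by
    refine tendsto_integral_of_dominated_convergence (fun t => -(μ {ω | Y ω ≥ t} - 1))
      (fun n => (((hμSanti n).measurable).sub measurable_const).aestronglyMeasurable)
      hYfin.2.neg (fun n => Eventually.of_forall fun t => ?_) ?_
    · have hle1 := hμle1 _ (hSm t n)
      have hYle : μ {ω | Y ω ≥ t} ≤ μ {ω | X n ω ≥ t} :=
        hmono _ _ (hYsm t) (hSm t n) (fun ω hω => le_trans hω (hbound n ω).1)
      rw [Real.norm_eq_abs, abs_of_nonpos (by linarith)]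
      linarith
    · exact ae_restrict_of_ae (hae.mono fun t ht => ht.sub_const 1)
  simp only [choquet]
  exact hIoi.add hIio
end

section
/- Let μ be a continuous capacity on a measurable space (Ω,𝓕) and let 𝓕₀ be a sub-σ-algebra of 𝓕 such that μ(A) ∈ {0,1} for every A ∈ 𝓕₀. Then for every 𝓕₀-measurable random variable ξ : Ω → ℝ one has μ({ω : ξ(ω) ≥ ∫_Ω ξ dμ}) = 1 and μ({ω : ξ(ω) ≤ ∫_Ω ξ dμ̄}) = 1, where the integrals are Choquet integrals with respect to μ and to the conjugate capacity μ̄ respectively. -/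
open MeasureTheory Filter Topology Set

/-!
Since `ξ` is `𝓕₀`-measurable, `t ↦ μ {ξ ≥ t}` is an antitone `{0, 1}`-valued function.
Continuity of `μ` makes it take the value `1` near `-∞`, the value `0` near `+∞`, and be
left-continuous, so it is the indicator of `(-∞, c]` for some real `c`; the Choquet integral of
`ξ` is then `c`, and `μ {ξ ≥ c} = 1`. The conjugate capacity is again a continuous capacity that
is `{0, 1}`-valued on `𝓕₀`, so the same holds for it with some threshold `d`. Hence
`μ {ξ < t} = 1` for every `t > d`, and continuity from above gives `μ {ξ ≤ d} = 1`.
-/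

lemma iInter_Ici_sub_one_div (t : ℝ) : ⋂ n : ℕ, Ici (t - 1 / (n + 1)) = Ici t := by
  ext x
  simp only [mem_iInter, mem_Ici]
  refine ⟨fun h => le_of_forall_pos_lt_add fun ε hε => ?_,
    fun h n => by linarith [Nat.one_div_pos_of_nat (α := ℝ) (n := n)]⟩
  obtain ⟨n, hn⟩ := exists_nat_one_div_lt hε
  linarith [h n]

lemma iInter_Iio_add_one_div (t : ℝ) : ⋂ n : ℕ, Iio (t + 1 / (n + 1)) = Iic t := by
  ext x
  simp only [mem_iInter, mem_Iio, mem_Iic]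
  refine ⟨fun h => le_of_forall_pos_lt_add fun ε hε => ?_,
    fun h n => by linarith [Nat.one_div_pos_of_nat (α := ℝ) (n := n)]⟩
  obtain ⟨n, hn⟩ := exists_nat_one_div_lt hε
  linarith [h n]

lemma iInter_Ici_natCast : ⋂ n : ℕ, Ici (n : ℝ) = ∅ :=
  eq_empty_of_forall_notMem fun x hx => by
    obtain ⟨n, hn⟩ := exists_nat_gt x
    exact hn.not_ge (mem_iInter.mp hx n)

lemma iUnion_Ici_neg_natCast : ⋃ n : ℕ, Ici (-(n : ℝ)) = univ :=
  eq_univ_of_forall fun x => by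
    obtain ⟨n, hn⟩ := exists_nat_gt (-x)
    exact mem_iUnion.mpr ⟨n, neg_le.mp hn.le⟩

lemma exists_eq_ite_le_of_antitone {f : ℝ → ℝ} (h01 : ∀ t, f t = 0 ∨ f t = 1)
    (hf : Antitone f) (h0 : ∃ t, f t = 0) (h1 : ∃ t, f t = 1)
    (hclosed : ∀ t, (∀ s < t, f s = 1) → f t = 1) :
    ∃ c, ∀ t, f t = if t ≤ c then 1 else 0 := by
  obtain ⟨t₀, ht₀⟩ := h0
  have hbdd : BddAbove {t | f t = 1} := ⟨t₀, fun t (ht : f t = 1) => not_lt.mp fun hlt => by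
    linarith [hf hlt.le]⟩
  have hlt : ∀ s < sSup {t | f t = 1}, f s = 1 := fun s hs => by
    obtain ⟨u, hu : f u = 1, hsu⟩ := exists_lt_of_lt_csSup h1 hs
    exact (h01 s).resolve_left fun h => by linarith [hf hsu.le]
  refine ⟨sSup {t | f t = 1}, fun t => ?_⟩
  split_ifs with ht
  · rcases ht.eq_or_lt with rfl | ht
    exacts [hclosed _ hlt, hlt t ht]
  · exact (h01 t).resolve_right fun h => ht (le_csSup hbdd h)

lemma choquet_eq_of_superlevel_eq_ite {Ω : Type*} {ν : Set Ω → ℝ} {ξ : Ω → ℝ} {c : ℝ}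
    (h : ∀ t, ν {ω | ξ ω ≥ t} = if t ≤ c then 1 else 0) : choquet ν ξ = c := by
  have hpos : ∀ t, ν {ω | ξ ω ≥ t} = (Iic c).indicator 1 t := fun t => by
    simp [h, indicator_apply]
  have hneg : ∀ t, (Iic c).indicator (1 : ℝ → ℝ) t - 1 = -(Ioi c).indicator 1 t := fun t => by
    by_cases ht : t ≤ c <;> simp [indicator_apply, ht]
  simp only [choquet, hpos, hneg, integral_neg, integral_indicator_one measurableSet_Iic,
    integral_indicator_one measurableSet_Ioi, measureReal_restrict_apply measurableSet_Iic,
    measureReal_restrict_apply measurableSet_Ioi, Iic_inter_Ioi, Ioi_inter_Iio,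
    Real.volume_real_Ioc, Real.volume_real_Ioo, sub_zero, zero_sub]
  exact max_zero_sub_eq_self c

lemma conjCap_eq_zero_or_one {Ω : Type*} {ν : Set Ω → ℝ} {m₀ : MeasurableSpace Ω}
    (h01 : ∀ A, MeasurableSet[m₀] A → ν A = 0 ∨ ν A = 1) (A : Set Ω)
    (hA : MeasurableSet[m₀] A) : conjCap ν A = 0 ∨ conjCap ν A = 1 := by
  rcases h01 _ hA.compl with h | h <;> simp [conjCap, h]

section Capacity

variable {Ω : Type*} {mΩ : MeasurableSpace Ω} {ν : Set Ω → ℝ}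

lemma IsCapacity.conjCap (h : IsCapacity ν) : IsCapacity (conjCap ν) := by
  obtain ⟨h0, h1, hmono⟩ := h
  refine ⟨by simp [_root_.conjCap, h1], by simp [_root_.conjCap, h0], fun A B hA hB hAB => ?_⟩
  have := hmono _ _ hB.compl hA.compl (compl_subset_compl.mpr hAB)
  simp only [_root_.conjCap]
  linarith

lemma ContBelow.conjCap (h : ContBelow ν) : ContAbove (conjCap ν) := fun A hA hanti => by
  have := h (fun n => (A n)ᶜ) (fun n => (hA n).compl) fun m n hmn =>
    compl_subset_compl.mpr (hanti hmn)
  rw [← compl_iInter] at this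
  exact tendsto_const_nhds.sub this

lemma ContAbove.conjCap (h : ContAbove ν) : ContBelow (conjCap ν) := fun A hA hmono => by
  have := h (fun n => (A n)ᶜ) (fun n => (hA n).compl) fun m n hmn =>
    compl_subset_compl.mpr (hmono hmn)
  rw [← compl_iUnion] at this
  exact tendsto_const_nhds.sub this

lemma ContAbove.apply_iInter_of_forall_eq (h : ContAbove ν) {A : ℕ → Set Ω}
    (hA : ∀ n, MeasurableSet (A n)) (hanti : Antitone A) {a : ℝ} (ha : ∀ n, ν (A n) = a) :
    ν (⋂ n, A n) = a :=
  tendsto_nhds_unique (h A hA hanti) (by simp only [ha]; exact tendsto_const_nhds)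

lemma ContBelow.apply_iUnion_of_forall_eq (h : ContBelow ν) {A : ℕ → Set Ω}
    (hA : ∀ n, MeasurableSet (A n)) (hmono : Monotone A) {a : ℝ} (ha : ∀ n, ν (A n) = a) :
    ν (⋃ n, A n) = a :=
  tendsto_nhds_unique (h A hA hmono) (by simp only [ha]; exact tendsto_const_nhds)

theorem superlevel_eq_ite_le_choquet (hcap : IsCapacity ν) (hb : ContBelow ν)
    (ha : ContAbove ν) {m₀ : MeasurableSpace Ω} (hm₀ : m₀ ≤ mΩ)
    (h01 : ∀ A, MeasurableSet[m₀] A → ν A = 0 ∨ ν A = 1) {ξ : Ω → ℝ} (hξ : Measurable[m₀] ξ)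
    (t : ℝ) : ν {ω | ξ ω ≥ t} = if t ≤ choquet ν ξ then 1 else 0 := by
  obtain ⟨hempty, huniv, hmono⟩ := hcap
  set f : ℝ → ℝ := fun t => ν (ξ ⁻¹' Ici t)
  have hE : ∀ t, MeasurableSet[mΩ] (ξ ⁻¹' Ici t) := fun t => hm₀ _ (hξ measurableSet_Ici)
  have hanti : Antitone fun t => ξ ⁻¹' Ici t := fun s t hst =>
    preimage_mono (Ici_subset_Ici.mpr hst)
  have hf01 : ∀ t, f t = 0 ∨ f t = 1 := fun t => h01 _ (hξ measurableSet_Ici)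
  have hf : Antitone f := fun s t hst => hmono _ _ (hE t) (hE s) (hanti hst)
  have h0 : ∃ t, f t = 0 := by
    by_contra! h
    have := ha.apply_iInter_of_forall_eq (fun n : ℕ => hE n) (hanti.comp_monotone Nat.mono_cast)
      fun n => (hf01 n).resolve_left (h n)
    rw [← preimage_iInter, iInter_Ici_natCast, preimage_empty, hempty] at this
    exact zero_ne_one this
  have h1 : ∃ t, f t = 1 := by
    by_contra! h
    have := hb.apply_iUnion_of_forall_eq (fun n : ℕ => hE (-n))
      (hanti.comp fun m n hmn => neg_le_neg (Nat.mono_cast hmn))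
      fun n => (hf01 _).resolve_right (h _)
    rw [← preimage_iUnion, iUnion_Ici_neg_natCast, preimage_univ, huniv] at this
    exact one_ne_zero this
  have hclosed : ∀ t, (∀ s < t, f s = 1) → f t = 1 := fun t hlt => by
    have := ha.apply_iInter_of_forall_eq (fun n : ℕ => hE (t - 1 / (n + 1)))
      (hanti.comp_monotone fun m n hmn => by gcongr)
      fun n => hlt _ (sub_lt_self t Nat.one_div_pos_of_nat)
    rwa [← preimage_iInter, iInter_Ici_sub_one_div] at this
  obtain ⟨c, hc⟩ := exists_eq_ite_le_of_antitone hf01 hf h0 h1 hclosed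
  rw [choquet_eq_of_superlevel_eq_ite hc]
  exact hc t

end Capacity

theorem stmt7 {Ω : Type*} [mΩ : MeasurableSpace Ω]
    (μ : Set Ω → ℝ) (hcap : IsCapacity μ) (hb : ContBelow μ) (ha : ContAbove μ)
    (m₀ : MeasurableSpace Ω) (hm₀ : m₀ ≤ mΩ)
    (h01 : ∀ A : Set Ω, MeasurableSet[m₀] A → μ A = 0 ∨ μ A = 1)
    (ξ : Ω → ℝ) (hξ : Measurable[m₀] ξ) :
    μ {ω | ξ ω ≥ choquet μ ξ} = 1 ∧ μ {ω | ξ ω ≤ choquet (conjCap μ) ξ} = 1 := by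
  refine ⟨by simpa using superlevel_eq_ite_le_choquet hcap hb ha hm₀ h01 hξ (choquet μ ξ), ?_⟩
  set d := choquet (conjCap μ) ξ
  have hlt : ∀ t, d < t → μ (ξ ⁻¹' Iio t) = 1 := fun t hdt => by
    have := superlevel_eq_ite_le_choquet hcap.conjCap ha.conjCap hb.conjCap hm₀
      (conjCap_eq_zero_or_one h01) hξ t
    rw [if_neg hdt.not_ge, conjCap, sub_eq_zero] at this
    rw [← compl_Ici, preimage_compl]
    exact this.symm
  have := ha.apply_iInter_of_forall_eq (A := fun n : ℕ => ξ ⁻¹' Iio (d + 1 / (n + 1)))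
    (fun n => hm₀ _ (hξ measurableSet_Iio))
    (fun m n hmn => preimage_mono (Iio_subset_Iio (by gcongr)))
    fun n => hlt _ (lt_add_of_pos_right d Nat.one_div_pos_of_nat)
  rwa [← preimage_iInter, iInter_Iio_add_one_div] at this
end

section
/- Let (V,v) be the pair of upper and lower probabilities on a measurable space (Ω,𝓕) generated by a nonempty set 𝒫 of finitely additive probabilities, and assume V and v are continuous. Let 𝓕₀ be a sub-σ-algebra of 𝓕 with v(A) ∈ {0,1} for every A ∈ 𝓕₀. Then for every 𝓕₀-measurable random variable ξ : Ω → ℝ: (1) v({ω : ∫_Ω ξ dv ≤ ξ(ω) ≤ ∫_Ω ξ dV}) = 1; (2) V({ω : ξ(ω) = ∫_Ω ξ dv}) = 1; (3) V({ω : ξ(ω) = ∫_Ω ξ dV}) = 1, where the integrals are Choquet integrals with respect to v and V respectively. -/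
open MeasureTheory Filter Topology Set

lemma union_ge_eq_gt {Ω : Type*} (ξ : Ω → ℝ) (s : ℝ) :
    (⋃ n : ℕ, {ω | ξ ω ≥ s + 1/((n:ℝ)+1)}) = {ω | s < ξ ω} := by
  ext ω
  simp only [Set.mem_iUnion, Set.mem_setOf_eq]
  constructor
  · rintro ⟨n, hn⟩
    have hpos : (0:ℝ) < 1/((n:ℝ)+1) := by positivity
    linarith
  · intro hω
    obtain ⟨n, hn⟩ := exists_nat_one_div_lt (sub_pos.2 hω)
    exact ⟨n, by linarith⟩

lemma mono_ge_seq {Ω : Type*} (ξ : Ω → ℝ) (s : ℝ) :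
    Monotone (fun n : ℕ => {ω | ξ ω ≥ s + 1/((n:ℝ)+1)}) := by
  intro n m hnm ω hω
  simp only [Set.mem_setOf_eq] at hω ⊢
  have h1 : 1/((m:ℝ)+1) ≤ 1/((n:ℝ)+1) := by
    apply one_div_le_one_div_of_le (by positivity)
    have : (n:ℝ) ≤ m := by exact_mod_cast hnm
    linarith
  linarith

lemma mu_gt_eq_zero {Ω : Type*} [mΩ : MeasurableSpace Ω] (μ : Set Ω → ℝ) (hcb : ContBelow μ)
    (m₀ : MeasurableSpace Ω) (hm₀ : m₀ ≤ mΩ)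
    (ξ : Ω → ℝ) (hξ : Measurable[m₀] ξ) (s : ℝ)
    (h0 : ∀ t : ℝ, s < t → μ {ω | ξ ω ≥ t} = 0) :
    μ {ω | s < ξ ω} = 0 := by
  have hA : ∀ n : ℕ, MeasurableSet[mΩ] {ω | ξ ω ≥ s + 1/((n:ℝ)+1)} :=
    fun n => hm₀ _ (hξ measurableSet_Ici)
  have h1 := hcb _ hA (mono_ge_seq ξ s)
  rw [union_ge_eq_gt] at h1
  have h2 : (fun n : ℕ => μ {ω | ξ ω ≥ s + 1/((n:ℝ)+1)}) = fun _ => (0:ℝ) := by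
    funext n
    have hpos : (0:ℝ) < 1/((n:ℝ)+1) := by positivity
    exact h0 _ (by linarith)
  rw [h2] at h1
  exact (tendsto_nhds_unique tendsto_const_nhds h1).symm

lemma exists_cut {Ω : Type*} [mΩ : MeasurableSpace Ω] (μ : Set Ω → ℝ)
    (hmono : ∀ A B : Set Ω, MeasurableSet[mΩ] A → MeasurableSet[mΩ] B → A ⊆ B → μ A ≤ μ B)
    (hempty : μ ∅ = 0) (huniv : μ Set.univ = 1)
    (hle1 : ∀ A : Set Ω, MeasurableSet[mΩ] A → μ A ≤ 1)
    (hcb : ContBelow μ) (hca : ContAbove μ)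
    (m₀ : MeasurableSpace Ω) (hm₀ : m₀ ≤ mΩ)
    (h01 : ∀ A : Set Ω, MeasurableSet[m₀] A → μ A = 0 ∨ μ A = 1)
    (ξ : Ω → ℝ) (hξ : Measurable[m₀] ξ) :
    ∃ c : ℝ, ∀ t : ℝ, μ {ω | ξ ω ≥ t} = if t ≤ c then 1 else 0 := by
  have meas0 : ∀ t : ℝ, MeasurableSet[m₀] {ω | ξ ω ≥ t} := fun t => hξ measurableSet_Ici
  have meas : ∀ t : ℝ, MeasurableSet[mΩ] {ω | ξ ω ≥ t} := fun t => hm₀ _ (meas0 t)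
  set S : Set ℝ := {t : ℝ | μ {ω | ξ ω ≥ t} = 1} with hS
  obtain ⟨t₀, ht₀⟩ : ∃ t₀ : ℝ, μ {ω | ξ ω ≥ t₀} = 0 := by
    have hanti : Antitone (fun n : ℕ => {ω | ξ ω ≥ (n:ℝ)}) := by
      intro n m hnm ω hω
      simp only [Set.mem_setOf_eq] at hω ⊢
      have : (n:ℝ) ≤ m := by exact_mod_cast hnm
      linarith
    have h1 := hca _ (fun n => meas (n:ℝ)) hanti
    have h2 : (⋂ n : ℕ, {ω | ξ ω ≥ (n:ℝ)}) = ∅ := by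
      ext ω
      simp only [Set.mem_iInter, Set.mem_setOf_eq, Set.mem_empty_iff_false, iff_false, not_forall]
      obtain ⟨n, hn⟩ := exists_nat_gt (ξ ω)
      exact ⟨n, by linarith⟩
    rw [h2, hempty] at h1
    obtain ⟨n, hn⟩ := (h1.eventually (Iio_mem_nhds (by norm_num : (0:ℝ) < 1/2))).exists
    refine ⟨(n:ℝ), ?_⟩
    rcases h01 _ (meas0 (n:ℝ)) with h | h
    · exact h
    · exfalso; rw [h] at hn; norm_num at hn
  have hSne : S.Nonempty := by
    have hmon : Monotone (fun n : ℕ => {ω | ξ ω ≥ -(n:ℝ)}) := by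
      intro n m hnm ω hω
      simp only [Set.mem_setOf_eq] at hω ⊢
      have : (n:ℝ) ≤ m := by exact_mod_cast hnm
      linarith
    have h1 := hcb _ (fun n => meas (-(n:ℝ))) hmon
    have h2 : (⋃ n : ℕ, {ω | ξ ω ≥ -(n:ℝ)}) = Set.univ := by
      ext ω
      simp only [Set.mem_iUnion, Set.mem_setOf_eq, Set.mem_univ, iff_true]
      obtain ⟨n, hn⟩ := exists_nat_gt (-ξ ω)
      exact ⟨n, by linarith⟩
    rw [h2, huniv] at h1
    obtain ⟨n, hn⟩ := (h1.eventually (Ioi_mem_nhds (by norm_num : (1:ℝ)/2 < 1))).exists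
    refine ⟨-(n:ℝ), ?_⟩
    rcases h01 _ (meas0 (-(n:ℝ))) with h | h
    · exfalso; rw [h] at hn; norm_num at hn
    · exact h
  have hSbdd : BddAbove S := by
    refine ⟨t₀, fun t ht => ?_⟩
    by_contra hcon
    push_neg at hcon
    have hsub : {ω | ξ ω ≥ t} ⊆ {ω | ξ ω ≥ t₀} := fun ω hω => le_trans hcon.le hω
    have := hmono _ _ (meas t) (meas t₀) hsub
    rw [ht, ht₀] at this
    linarith
  set c := sSup S with hc
  have claim1 : ∀ t : ℝ, t < c → μ {ω | ξ ω ≥ t} = 1 := by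
    intro t ht
    obtain ⟨s, hsS, hts⟩ := exists_lt_of_lt_csSup hSne ht
    have hsub : {ω | ξ ω ≥ s} ⊆ {ω | ξ ω ≥ t} := fun ω hω => le_trans hts.le hω
    have h1 := hmono _ _ (meas s) (meas t) hsub
    rw [hsS] at h1
    exact le_antisymm (hle1 _ (meas t)) h1
  have claim2 : μ {ω | ξ ω ≥ c} = 1 := by
    have hanti : Antitone (fun n : ℕ => {ω | ξ ω ≥ c - 1/((n:ℝ)+1)}) := by
      intro n m hnm ω hω
      simp only [Set.mem_setOf_eq] at hω ⊢
      have h1 : 1/((m:ℝ)+1) ≤ 1/((n:ℝ)+1) := by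
        apply one_div_le_one_div_of_le (by positivity)
        have : (n:ℝ) ≤ m := by exact_mod_cast hnm
        linarith
      linarith
    have h1 := hca _ (fun n => meas _) hanti
    have h2 : (⋂ n : ℕ, {ω | ξ ω ≥ c - 1/((n:ℝ)+1)}) = {ω | ξ ω ≥ c} := by
      ext ω
      simp only [Set.mem_iInter, Set.mem_setOf_eq]
      constructor
      · intro hω
        by_contra hcon
        push_neg at hcon
        obtain ⟨n, hn⟩ := exists_nat_one_div_lt (sub_pos.2 hcon)
        have := hω n
        linarith
      · intro hω n
        have : (0:ℝ) < 1/((n:ℝ)+1) := by positivity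
        linarith
    rw [h2] at h1
    have h3 : (fun n : ℕ => μ {ω | ξ ω ≥ c - 1/((n:ℝ)+1)}) = fun _ => (1:ℝ) := by
      funext n
      have hpos : (0:ℝ) < 1/((n:ℝ)+1) := by positivity
      exact claim1 _ (by linarith)
    rw [h3] at h1
    exact (tendsto_nhds_unique tendsto_const_nhds h1).symm
  refine ⟨c, fun t => ?_⟩
  by_cases ht : t ≤ c
  · rw [if_pos ht]
    rcases lt_or_eq_of_le ht with h | h
    · exact claim1 t h
    · rw [h]; exact claim2
  · rw [if_neg ht]
    rcases h01 _ (meas0 t) with h | h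
    · exact h
    · exfalso; exact ht (le_csSup hSbdd h)

lemma choquet_cut {Ω : Type*} (μ : Set Ω → ℝ) (ξ : Ω → ℝ) (c : ℝ)
    (h : ∀ t : ℝ, μ {ω | ξ ω ≥ t} = if t ≤ c then 1 else 0) :
    choquet μ ξ = c := by
  have h1 : ∀ t : ℝ, μ {ω | ξ ω ≥ t} = Set.indicator (Set.Iic c) (fun _ => (1:ℝ)) t := by
    intro t; rw [h t]
    by_cases ht : t ≤ c
    · simp [Set.indicator_of_mem, ht]
    · simp [Set.indicator_of_notMem, ht]
  unfold choquet
  simp only [h1]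
  have e1 : (∫ t in Set.Ioi (0:ℝ), Set.indicator (Set.Iic c) (fun _ => (1:ℝ)) t) = max c 0 := by
    rw [MeasureTheory.setIntegral_indicator measurableSet_Iic, Set.Ioi_inter_Iic,
      MeasureTheory.setIntegral_const]
    simp [Real.volume_Ioc, ENNReal.toReal_ofReal']
  have e2 : (∫ t in Set.Iio (0:ℝ), (Set.indicator (Set.Iic c) (fun _ => (1:ℝ)) t - 1))
      = -(max (-c) 0) := by
    have h2 : ∀ t : ℝ, Set.indicator (Set.Iic c) (fun _ => (1:ℝ)) t - 1
        = -(Set.indicator (Set.Ioi c) (fun _ => (1:ℝ)) t) := by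
      intro t
      rcases le_or_gt t c with ht | ht
      · simp [Set.indicator_of_mem, ht, Set.indicator_of_notMem, not_lt.2 ht]
      · simp [Set.indicator_of_notMem, not_le.2 ht, Set.indicator_of_mem, ht]
    simp only [h2]
    rw [MeasureTheory.integral_neg, MeasureTheory.setIntegral_indicator measurableSet_Ioi,
      Set.Iio_inter_Ioi, MeasureTheory.setIntegral_const]
    simp [Real.volume_Ioo, ENNReal.toReal_ofReal']
  rw [e1, e2]
  rcases le_total c 0 with h3 | h3
  · rw [max_eq_right h3, max_eq_left (by linarith)]; ring
  · rw [max_eq_left h3, max_eq_right (by linarith)]; ring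

theorem stmt9 {Ω : Type*} [mΩ : MeasurableSpace Ω]
    (𝒮 : Set (Set Ω → ℝ)) (h𝒮 : 𝒮.Nonempty) (hP : ∀ P ∈ 𝒮, IsFinAddProb P)
    (V v : Set Ω → ℝ) (hV : UpperProbOf 𝒮 V) (hv : LowerProbOf 𝒮 v)
    (hVb : ContBelow V) (hVa : ContAbove V) (hvb : ContBelow v) (hva : ContAbove v)
    (m₀ : MeasurableSpace Ω) (hm₀ : m₀ ≤ mΩ)
    (h01 : ∀ A : Set Ω, MeasurableSet[m₀] A → v A = 0 ∨ v A = 1)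
    (ξ : Ω → ℝ) (hξ : Measurable[m₀] ξ) :
    v {ω | choquet v ξ ≤ ξ ω ∧ ξ ω ≤ choquet V ξ} = 1 ∧
    V {ω | ξ ω = choquet v ξ} = 1 ∧
    V {ω | ξ ω = choquet V ξ} = 1 := by
  obtain ⟨P₀, hP₀⟩ := h𝒮
  have himg_ne : ∀ A : Set Ω, ((fun P => P A) '' 𝒮).Nonempty := fun A => ⟨P₀ A, ⟨P₀, hP₀, rfl⟩⟩
  have hbddA : ∀ A : Set Ω, MeasurableSet[mΩ] A → BddAbove ((fun P => P A) '' 𝒮) := by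
    intro A hA
    refine ⟨1, ?_⟩
    rintro y ⟨P, hPm, rfl⟩
    exact ((hP P hPm).2.2.1 A hA).2
  have hbddB : ∀ A : Set Ω, MeasurableSet[mΩ] A → BddBelow ((fun P => P A) '' 𝒮) := by
    intro A hA
    refine ⟨0, ?_⟩
    rintro y ⟨P, hPm, rfl⟩
    exact ((hP P hPm).2.2.1 A hA).1
  have hvleP : ∀ P ∈ 𝒮, ∀ A : Set Ω, MeasurableSet[mΩ] A → v A ≤ P A := by
    intro P hPm A hA
    rw [hv A hA]
    exact csInf_le (hbddB A hA) ⟨P, hPm, rfl⟩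
  have hPleV : ∀ P ∈ 𝒮, ∀ A : Set Ω, MeasurableSet[mΩ] A → P A ≤ V A := by
    intro P hPm A hA
    rw [hV A hA]
    exact le_csSup (hbddA A hA) ⟨P, hPm, rfl⟩
  have hInfConst : ∀ (A : Set Ω) (r : ℝ), (∀ P ∈ 𝒮, P A = r) →
      sInf ((fun P => P A) '' 𝒮) = r := by
    intro A r h
    have : (fun P => P A) '' 𝒮 = {r} := by
      apply Set.eq_singleton_iff_nonempty_unique_mem.2
      exact ⟨himg_ne A, by rintro y ⟨P, hPm, rfl⟩; exact h P hPm⟩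
    rw [this, csInf_singleton]
  have hSupConst : ∀ (A : Set Ω) (r : ℝ), (∀ P ∈ 𝒮, P A = r) →
      sSup ((fun P => P A) '' 𝒮) = r := by
    intro A r h
    have : (fun P => P A) '' 𝒮 = {r} := by
      apply Set.eq_singleton_iff_nonempty_unique_mem.2
      exact ⟨himg_ne A, by rintro y ⟨P, hPm, rfl⟩; exact h P hPm⟩
    rw [this, csSup_singleton]
  have hPmono : ∀ P ∈ 𝒮, ∀ A B : Set Ω, MeasurableSet[mΩ] A → MeasurableSet[mΩ] B →
      A ⊆ B → P A ≤ P B := by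
    intro P hPm A B hA hB hAB
    have h1 : P (A ∪ (B \ A)) = P A + P (B \ A) :=
      (hP P hPm).2.2.2 A (B \ A) hA (hB.diff hA) disjoint_sdiff_right
    rw [Set.union_diff_cancel hAB] at h1
    have h2 : 0 ≤ P (B \ A) := ((hP P hPm).2.2.1 _ (hB.diff hA)).1
    linarith
  have hvmono : ∀ A B : Set Ω, MeasurableSet[mΩ] A → MeasurableSet[mΩ] B → A ⊆ B →
      v A ≤ v B := by
    intro A B hA hB hAB
    rw [hv A hA, hv B hB]
    apply le_csInf (himg_ne B)
    rintro y ⟨P, hPm, rfl⟩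
    exact le_trans (csInf_le (hbddB A hA) ⟨P, hPm, rfl⟩) (hPmono P hPm A B hA hB hAB)
  have hVmono : ∀ A B : Set Ω, MeasurableSet[mΩ] A → MeasurableSet[mΩ] B → A ⊆ B →
      V A ≤ V B := by
    intro A B hA hB hAB
    rw [hV A hA, hV B hB]
    apply csSup_le (himg_ne A)
    rintro y ⟨P, hPm, rfl⟩
    exact le_trans (hPmono P hPm A B hA hB hAB) (le_csSup (hbddA B hB) ⟨P, hPm, rfl⟩)
  have hvempty : v ∅ = 0 := by
    rw [hv _ (@MeasurableSet.empty Ω mΩ)]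
    exact hInfConst _ _ (fun P h => (hP P h).1)
  have hvuniv : v Set.univ = 1 := by
    rw [hv _ (@MeasurableSet.univ Ω mΩ)]
    exact hInfConst _ _ (fun P h => (hP P h).2.1)
  have hVempty : V ∅ = 0 := by
    rw [hV _ (@MeasurableSet.empty Ω mΩ)]
    exact hSupConst _ _ (fun P h => (hP P h).1)
  have hVuniv : V Set.univ = 1 := by
    rw [hV _ (@MeasurableSet.univ Ω mΩ)]
    exact hSupConst _ _ (fun P h => (hP P h).2.1)
  have hvle1 : ∀ A : Set Ω, MeasurableSet[mΩ] A → v A ≤ 1 :=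
    fun A hA => le_trans (hvleP P₀ hP₀ A hA) ((hP P₀ hP₀).2.2.1 A hA).2
  have hVle1 : ∀ A : Set Ω, MeasurableSet[mΩ] A → V A ≤ 1 := by
    intro A hA
    rw [hV A hA]
    apply csSup_le (himg_ne A)
    rintro y ⟨P, hPm, rfl⟩
    exact ((hP P hPm).2.2.1 A hA).2
  have hPcompl : ∀ P ∈ 𝒮, ∀ A : Set Ω, MeasurableSet[mΩ] A → P A + P Aᶜ = 1 := by
    intro P hPm A hA
    have h1 : P (A ∪ Aᶜ) = P A + P Aᶜ :=
      (hP P hPm).2.2.2 A Aᶜ hA hA.compl disjoint_compl_right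
    rw [Set.union_compl_self] at h1
    rw [← h1, (hP P hPm).2.1]
  have hconj : ∀ A : Set Ω, MeasurableSet[mΩ] A → V A = 1 - v Aᶜ := by
    intro A hA
    rw [hV A hA, hv Aᶜ hA.compl]
    apply le_antisymm
    · apply csSup_le (himg_ne A)
      rintro y ⟨P, hPm, rfl⟩
      have h1 := hPcompl P hPm A hA
      have h2 : sInf ((fun P => P Aᶜ) '' 𝒮) ≤ P Aᶜ := csInf_le (hbddB Aᶜ hA.compl) ⟨P, hPm, rfl⟩
      linarith
    · have h3 : ∀ y ∈ (fun P => P Aᶜ) '' 𝒮, 1 - sSup ((fun P => P A) '' 𝒮) ≤ y := by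
        rintro y ⟨P, hPm, rfl⟩
        have h1 := hPcompl P hPm A hA
        have h2 : P A ≤ sSup ((fun P => P A) '' 𝒮) := le_csSup (hbddA A hA) ⟨P, hPm, rfl⟩
        linarith
      have h4 := le_csInf (himg_ne Aᶜ) h3
      linarith
  have h01V : ∀ A : Set Ω, MeasurableSet[m₀] A → V A = 0 ∨ V A = 1 := by
    intro A hA
    rw [hconj A (hm₀ _ hA)]
    rcases h01 Aᶜ hA.compl with h | h
    · right; rw [h]; ring
    · left; rw [h]; ring
  -- P-probability of an intersection with a sure event
  have hPinter : ∀ P ∈ 𝒮, ∀ A B : Set Ω, MeasurableSet[mΩ] A → MeasurableSet[mΩ] B →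
      P A = 1 → P (A ∩ B) = P B := by
    intro P hPm A B hA hB hPA
    have h1 : P ((B ∩ A) ∪ (B \ A)) = P (B ∩ A) + P (B \ A) :=
      (hP P hPm).2.2.2 _ _ (hB.inter hA) (hB.diff hA)
        (disjoint_sdiff_right.mono_left Set.inter_subset_right)
    rw [Set.inter_union_diff] at h1
    have h2 : P (A ∪ (B \ A)) = P A + P (B \ A) :=
      (hP P hPm).2.2.2 A (B \ A) hA (hB.diff hA) disjoint_sdiff_right
    rw [Set.union_diff_self] at h2
    have h3 : P (A ∪ B) ≤ 1 := ((hP P hPm).2.2.1 _ (hA.union hB)).2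
    have h4 : 0 ≤ P (B \ A) := ((hP P hPm).2.2.1 _ (hB.diff hA)).1
    have h5 : P (B \ A) = 0 := by linarith
    rw [Set.inter_comm]
    linarith
  have hPeq1 : ∀ P ∈ 𝒮, ∀ A : Set Ω, MeasurableSet[mΩ] A → v A = 1 → P A = 1 := by
    intro P hPm A hA hvA
    have h1 := hvleP P hPm A hA
    have h2 := ((hP P hPm).2.2.1 A hA).2
    rw [hvA] at h1
    linarith
  -- (e) : v of intersection of two v-sure sets
  have hvinter : ∀ A B : Set Ω, MeasurableSet[mΩ] A → MeasurableSet[mΩ] B →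
      v A = 1 → v B = 1 → v (A ∩ B) = 1 := by
    intro A B hA hB hvA hvB
    rw [hv _ (hA.inter hB)]
    apply hInfConst
    intro P hPm
    rw [hPinter P hPm A B hA hB (hPeq1 P hPm A hA hvA)]
    exact hPeq1 P hPm B hB hvB
  -- (f) : V of intersection of a v-sure set with a V-sure set
  have hVinter : ∀ A B : Set Ω, MeasurableSet[mΩ] A → MeasurableSet[mΩ] B →
      v A = 1 → V B = 1 → V (A ∩ B) = 1 := by
    intro A B hA hB hvA hVB
    rw [hV _ (hA.inter hB)]
    have himg : (fun P => P (A ∩ B)) '' 𝒮 = (fun P => P B) '' 𝒮 :=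
      Set.image_congr (fun P hPm => hPinter P hPm A B hA hB (hPeq1 P hPm A hA hvA))
    rw [himg, ← hV B hB, hVB]
  -- cut points
  obtain ⟨c, hcut_v⟩ := exists_cut (mΩ := mΩ) v hvmono hvempty hvuniv hvle1 hvb hva m₀ hm₀ h01 ξ hξ
  obtain ⟨d, hcut_V⟩ := exists_cut (mΩ := mΩ) V hVmono hVempty hVuniv hVle1 hVb hVa m₀ hm₀ h01V ξ hξ
  have hch_v : choquet v ξ = c := choquet_cut v ξ c hcut_v
  have hch_V : choquet V ξ = d := choquet_cut V ξ d hcut_V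
  have measGe : ∀ t : ℝ, MeasurableSet[mΩ] {ω | ξ ω ≥ t} :=
    fun t => hm₀ _ (hξ measurableSet_Ici)
  have measLe : ∀ t : ℝ, MeasurableSet[mΩ] {ω | ξ ω ≤ t} :=
    fun t => hm₀ _ (hξ measurableSet_Iic)
  have hLe_compl : ∀ t : ℝ, {ω | ξ ω ≤ t}ᶜ = {ω | t < ξ ω} := by
    intro t; ext ω; simp [not_le]
  have hvGc : v {ω | ξ ω ≥ c} = 1 := by
    have := hcut_v c; rwa [if_pos le_rfl] at this
  have hVGd : V {ω | ξ ω ≥ d} = 1 := by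
    have := hcut_V d; rwa [if_pos le_rfl] at this
  have hVgt : V {ω | d < ξ ω} = 0 := by
    apply mu_gt_eq_zero (mΩ := mΩ) V hVb m₀ hm₀ ξ hξ
    intro t ht
    have := hcut_V t; rwa [if_neg (not_le.2 ht)] at this
  have hvgt : v {ω | c < ξ ω} = 0 := by
    apply mu_gt_eq_zero (mΩ := mΩ) v hvb m₀ hm₀ ξ hξ
    intro t ht
    have := hcut_v t; rwa [if_neg (not_le.2 ht)] at this
  have measGt : ∀ t : ℝ, MeasurableSet[mΩ] {ω | t < ξ ω} :=
    fun t => hm₀ _ (hξ measurableSet_Ioi)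
  have hGt_compl : ∀ t : ℝ, {ω | t < ξ ω}ᶜ = {ω | ξ ω ≤ t} := by
    intro t; ext ω; simp [not_lt]
  have hvLd : v {ω | ξ ω ≤ d} = 1 := by
    have h1 := hconj {ω | d < ξ ω} (measGt d)
    rw [hGt_compl, hVgt] at h1
    linarith
  have hVLc : V {ω | ξ ω ≤ c} = 1 := by
    have h1 := hconj {ω | ξ ω ≤ c} (measLe c)
    rw [hLe_compl, hvgt] at h1
    linarith
  refine ⟨?_, ?_, ?_⟩
  · rw [hch_v, hch_V]
    have hset : {ω | c ≤ ξ ω ∧ ξ ω ≤ d} = {ω | ξ ω ≥ c} ∩ {ω | ξ ω ≤ d} := rfl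
    rw [hset]
    exact hvinter _ _ (measGe c) (measLe d) hvGc hvLd
  · rw [hch_v]
    have hset : {ω | ξ ω = c} = {ω | ξ ω ≥ c} ∩ {ω | ξ ω ≤ c} := by
      ext ω
      simp only [Set.mem_setOf_eq, Set.mem_inter_iff, ge_iff_le]
      constructor
      · rintro rfl; exact ⟨le_rfl, le_rfl⟩
      · rintro ⟨h1, h2⟩; exact le_antisymm h2 h1
    rw [hset]
    exact hVinter _ _ (measGe c) (measLe c) hvGc hVLc
  · rw [hch_V]
    have hset : {ω | ξ ω = d} = {ω | ξ ω ≤ d} ∩ {ω | ξ ω ≥ d} := by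
      ext ω
      simp only [Set.mem_setOf_eq, Set.mem_inter_iff, ge_iff_le]
      constructor
      · rintro rfl; exact ⟨le_rfl, le_rfl⟩
      · rintro ⟨h1, h2⟩; exact le_antisymm h1 h2
    rw [hset]
    exact hVinter _ _ (measLe d) (measGe d) hvLd hVGd
end

section
/- Let V be the upper probability on a measurable space (Ω,𝓕) generated by a nonempty set 𝒫 of finitely additive probabilities, assume V is continuous from below, and let θ : Ω → Ω be a measurable transformation preserving V. Consider the statements: (i) θ is ergodic with respect to V; (ii) for every B ∈ 𝓕 with V(θ⁻¹B △ B) = 0, either V(B) = 0 or V(Bᶜ) = 0; (iii) for every A ∈ 𝓕 with V(A) > 0, V((⋃_{n=1}^∞ θ^{−n}A)ᶜ) = 0; (iv) for all A, B ∈ 𝓕 with V(A) > 0 and V(B) > 0 there exists n ∈ ℕ with V(θ^{−n}A ∩ B) > 0. Then (i) and (ii) are equivalent, (iii) implies (iv), and (iv) implies (i). -/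
open MeasureTheory Filter Topology Set

open scoped symmDiff

/-!
An upper probability `V` is monotone and subadditive, and continuity from below upgrades
subadditivity to: a countable union of `V`-null sets is `V`-null. Hence `V(A ∆ B) = 0` forces
`V A = V B`, and `V`-null sets behave as they do for a measure. For (i) ⇒ (ii), an almost
invariant `B` has `V(θ⁻ⁿB ∆ B) = 0` for all `n` since `θ` preserves `V`, so
`B' = limsup θ⁻ⁿB` is a strictly invariant set with `V(B' ∆ B) = 0`, to which ergodicity applies.
For (iii) ⇒ (iv), `B` is covered by the null set `(⋃ θ⁻ⁿA)ᶜ` and the sets `θ⁻ⁿA ∩ B`.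
For (iv) ⇒ (i), an invariant `B` with `V B > 0` and `V Bᶜ > 0` would give
`0 < V(θ⁻ⁿB ∩ Bᶜ) = V ∅`. Throughout, the clause `V B = 0 ∨ V B = 1` of ergodicity comes for
free from `V B = 0 ∨ V Bᶜ = 0`, since `1 ≤ V B + V Bᶜ` and `V B ≤ 1`.
-/

section FinAddProb

variable {Ω : Type*} [MeasurableSpace Ω] {P : Set Ω → ℝ} {A B : Set Ω}

theorem IsFinAddProb.union_eq_add_diff (hP : IsFinAddProb P) (hA : MeasurableSet A)
    (hB : MeasurableSet B) : P (A ∪ B) = P A + P (B \ A) := by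
  rw [← union_sdiff_self]
  exact hP.2.2.2 A (B \ A) hA (hB.diff hA) disjoint_sdiff_self_right

theorem IsFinAddProb.mono (hP : IsFinAddProb P) (hA : MeasurableSet A) (hB : MeasurableSet B)
    (hAB : A ⊆ B) : P A ≤ P B := by
  have h := hP.union_eq_add_diff hA hB
  rw [union_eq_self_of_subset_left hAB] at h
  linarith [(hP.2.2.1 _ (hB.diff hA)).1]

theorem IsFinAddProb.add_compl (hP : IsFinAddProb P) (hA : MeasurableSet A) :
    P A + P Aᶜ = 1 := by
  rw [← hP.2.2.2 A Aᶜ hA hA.compl disjoint_compl_right, union_compl_self, hP.2.1]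

end FinAddProb

section UpperProbOf

variable {Ω : Type*} [MeasurableSpace Ω] {𝒮 : Set (Set Ω → ℝ)} {V : Set Ω → ℝ} {A : Set Ω}

theorem UpperProbOf.apply_le (hV : UpperProbOf 𝒮 V) (hP : ∀ P ∈ 𝒮, IsFinAddProb P)
    {P : Set Ω → ℝ} (hPS : P ∈ 𝒮) (hA : MeasurableSet A) : P A ≤ V A := by
  rw [hV A hA]
  exact le_csSup ⟨1, by rintro _ ⟨Q, hQ, rfl⟩; exact ((hP Q hQ).2.2.1 A hA).2⟩ ⟨P, hPS, rfl⟩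

theorem UpperProbOf.le_of_forall_apply_le (hV : UpperProbOf 𝒮 V) (h𝒮 : 𝒮.Nonempty)
    (hA : MeasurableSet A) {c : ℝ} (h : ∀ P ∈ 𝒮, P A ≤ c) : V A ≤ c := by
  rw [hV A hA]
  exact csSup_le (h𝒮.image _) (by rintro _ ⟨P, hP, rfl⟩; exact h P hP)

end UpperProbOf

def IsUpperProb {Ω : Type*} [MeasurableSpace Ω] (V : Set Ω → ℝ) : Prop :=
  ∃ 𝒮 : Set (Set Ω → ℝ), 𝒮.Nonempty ∧ (∀ P ∈ 𝒮, IsFinAddProb P) ∧ UpperProbOf 𝒮 V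

namespace IsUpperProb

variable {Ω : Type*} [MeasurableSpace Ω] {V : Set Ω → ℝ} {A B C : Set Ω}

theorem empty (hV : IsUpperProb V) : V ∅ = 0 := by
  obtain ⟨𝒮, ⟨P, hPS⟩, hP, hV⟩ := hV
  refine le_antisymm (hV.le_of_forall_apply_le ⟨P, hPS⟩ .empty fun Q hQ => (hP Q hQ).1.le) ?_
  exact (hP P hPS).1 ▸ hV.apply_le hP hPS .empty

theorem nonneg (hV : IsUpperProb V) (hA : MeasurableSet A) : 0 ≤ V A := by
  obtain ⟨𝒮, ⟨P, hPS⟩, hP, hV⟩ := hV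
  exact ((hP P hPS).2.2.1 A hA).1.trans (hV.apply_le hP hPS hA)

theorem le_one (hV : IsUpperProb V) (hA : MeasurableSet A) : V A ≤ 1 := by
  obtain ⟨𝒮, h𝒮, hP, hV⟩ := hV
  exact hV.le_of_forall_apply_le h𝒮 hA fun P hPS => ((hP P hPS).2.2.1 A hA).2

theorem mono (hV : IsUpperProb V) (hA : MeasurableSet A) (hB : MeasurableSet B) (hAB : A ⊆ B) :
    V A ≤ V B := by
  obtain ⟨𝒮, h𝒮, hP, hV⟩ := hV
  exact hV.le_of_forall_apply_le h𝒮 hA fun P hPS =>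
    ((hP P hPS).mono hA hB hAB).trans (hV.apply_le hP hPS hB)

theorem union_le (hV : IsUpperProb V) (hA : MeasurableSet A) (hB : MeasurableSet B) :
    V (A ∪ B) ≤ V A + V B := by
  obtain ⟨𝒮, h𝒮, hP, hV⟩ := hV
  refine hV.le_of_forall_apply_le h𝒮 (hA.union hB) fun P hPS => ?_
  rw [(hP P hPS).union_eq_add_diff hA hB]
  exact add_le_add (hV.apply_le hP hPS hA)
    (((hP P hPS).mono (hB.diff hA) hB sdiff_subset).trans (hV.apply_le hP hPS hB))

theorem one_le_add_compl (hV : IsUpperProb V) (hA : MeasurableSet A) : 1 ≤ V A + V Aᶜ := by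
  obtain ⟨𝒮, ⟨P, hPS⟩, hP, hV⟩ := hV
  rw [← (hP P hPS).add_compl hA]
  exact add_le_add (hV.apply_le hP hPS hA) (hV.apply_le hP hPS hA.compl)

theorem eq_one_of_compl_eq_zero (hV : IsUpperProb V) (hA : MeasurableSet A) (h : V Aᶜ = 0) :
    V A = 1 :=
  le_antisymm (hV.le_one hA) (by linarith [hV.one_le_add_compl hA])

theorem eq_zero_of_subset (hV : IsUpperProb V) (hA : MeasurableSet A) (hB : MeasurableSet B)
    (hAB : A ⊆ B) (hB0 : V B = 0) : V A = 0 :=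
  le_antisymm (hB0 ▸ hV.mono hA hB hAB) (hV.nonneg hA)

theorem union_eq_zero (hV : IsUpperProb V) (hA : MeasurableSet A) (hB : MeasurableSet B)
    (hA0 : V A = 0) (hB0 : V B = 0) : V (A ∪ B) = 0 :=
  le_antisymm (by simpa [hA0, hB0] using hV.union_le hA hB) (hV.nonneg (hA.union hB))

theorem iUnion_eq_zero (hV : IsUpperProb V) (hVb : ContBelow V) {A : ℕ → Set Ω}
    (hA : ∀ n, MeasurableSet (A n)) (hA0 : ∀ n, V (A n) = 0) : V (⋃ n, A n) = 0 := by
  have hacc : ∀ n, MeasurableSet (accumulate A n) := fun n =>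
    .biUnion (to_countable _) fun k _ => hA k
  have hacc0 : ∀ n, V (accumulate A n) = 0 := by
    intro n
    induction n with
    | zero => simpa using hA0 0
    | succ n ih =>
      rw [accumulate_succ]
      exact hV.union_eq_zero (hacc n) (hA _) ih (hA0 _)
  have hlim := hVb _ hacc monotone_accumulate
  rw [iUnion_accumulate] at hlim
  exact tendsto_nhds_unique hlim (by simp only [hacc0]; exact tendsto_const_nhds)

theorem symmDiff_eq_zero_trans (hV : IsUpperProb V) (hA : MeasurableSet A)
    (hB : MeasurableSet B) (hC : MeasurableSet C) (hAB : V (A ∆ B) = 0) (hBC : V (B ∆ C) = 0) :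
    V (A ∆ C) = 0 :=
  hV.eq_zero_of_subset (hA.symmDiff hC) ((hA.symmDiff hB).union (hB.symmDiff hC))
    (symmDiff_triangle A B C) (hV.union_eq_zero (hA.symmDiff hB) (hB.symmDiff hC) hAB hBC)

theorem le_of_symmDiff_eq_zero (hV : IsUpperProb V) (hA : MeasurableSet A)
    (hB : MeasurableSet B) (h : V (A ∆ B) = 0) : V A ≤ V B := by
  have hcover : A ⊆ B ∪ A ∆ B := fun x hx => by
    by_cases hxB : x ∈ B
    exacts [.inl hxB, .inr (.inl ⟨hx, hxB⟩)]
  calc V A ≤ V (B ∪ A ∆ B) := hV.mono hA (hB.union (hA.symmDiff hB)) hcover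
    _ ≤ V B + V (A ∆ B) := hV.union_le hB (hA.symmDiff hB)
    _ = V B := by rw [h, add_zero]

theorem eq_of_symmDiff_eq_zero (hV : IsUpperProb V) (hA : MeasurableSet A)
    (hB : MeasurableSet B) (h : V (A ∆ B) = 0) : V A = V B :=
  le_antisymm (hV.le_of_symmDiff_eq_zero hA hB h)
    (hV.le_of_symmDiff_eq_zero hB hA (symmDiff_comm A B ▸ h))

end IsUpperProb

theorem Set.symmDiff_limsup_subset {α : Type*} (s : ℕ → Set α) (t : Set α) :
    limsup s atTop ∆ t ⊆ ⋃ n, s n ∆ t := by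
  rintro x (⟨hs, ht⟩ | ⟨ht, hs⟩)
  · obtain ⟨n, hn⟩ := (mem_limsup_iff_frequently_mem.1 hs).exists
    exact mem_iUnion.2 ⟨n, .inl ⟨hn, ht⟩⟩
  · rw [mem_limsup_iff_frequently_mem, not_frequently] at hs
    obtain ⟨n, hn⟩ := hs.exists
    exact mem_iUnion.2 ⟨n, .inr ⟨ht, hn⟩⟩

section Ergodic

variable {Ω : Type*} [MeasurableSpace Ω] {V : Set Ω → ℝ} {θ : Ω → Ω} {A B : Set Ω}

theorem PreservesCap.iterate (hpres : PreservesCap V θ) (hθ : Measurable θ) (n : ℕ) :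
    PreservesCap V θ^[n] := by
  induction n with
  | zero => intro A _; rfl
  | succ n ih =>
    intro A hA
    rw [Function.iterate_succ, preimage_comp, hpres _ (hθ.iterate n hA), ih A hA]

theorem IsUpperProb.symmDiff_preimage_iterate_eq_zero (hV : IsUpperProb V)
    (hθ : Measurable θ) (hpres : PreservesCap V θ) (hB : MeasurableSet B)
    (h : V ((θ ⁻¹' B) ∆ B) = 0) (n : ℕ) : V ((θ^[n] ⁻¹' B) ∆ B) = 0 := by
  induction n with
  | zero => simpa using hV.empty
  | succ n ih =>
    refine hV.symmDiff_eq_zero_trans (hθ.iterate _ hB) (hθ.iterate n hB) hB ?_ ih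
    rw [Function.iterate_succ', preimage_comp, ← preimage_symmDiff,
      hpres.iterate hθ n _ ((hθ hB).symmDiff hB), h]

theorem IsUpperProb.ergodicCap_iff (hV : IsUpperProb V) :
    ErgodicCap V θ ↔ ∀ B, MeasurableSet B → θ ⁻¹' B = B → V B = 0 ∨ V Bᶜ = 0 :=
  ⟨fun h B hB hinv => (h B hB hinv).2, fun h B hB hinv =>
    ⟨(h B hB hinv).imp_right (hV.eq_one_of_compl_eq_zero hB), h B hB hinv⟩⟩

theorem ErgodicCap.eq_zero_or_compl_eq_zero_of_symmDiff (herg : ErgodicCap V θ)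
    (hV : IsUpperProb V) (hVb : ContBelow V) (hθ : Measurable θ) (hpres : PreservesCap V θ)
    (hB : MeasurableSet B) (h : V ((θ ⁻¹' B) ∆ B) = 0) : V B = 0 ∨ V Bᶜ = 0 := by
  set B' := limsup (fun n => θ^[n] ⁻¹' B) atTop
  have hBn : ∀ n, MeasurableSet (θ^[n] ⁻¹' B) := fun n => hθ.iterate n hB
  have hB' : MeasurableSet B' := .measurableSet_limsup hBn
  have hinv : θ ⁻¹' B' = B' := by
    simp only [B', preimage_iterate_eq]
    exact CompleteLatticeHom.apply_limsup_iterate (CompleteLatticeHom.setPreimage θ) B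
  have hnull : V (B' ∆ B) = 0 :=
    hV.eq_zero_of_subset (hB'.symmDiff hB) (.iUnion fun n => (hBn n).symmDiff hB)
      (symmDiff_limsup_subset _ _) (hV.iUnion_eq_zero hVb (fun n => (hBn n).symmDiff hB)
        (hV.symmDiff_preimage_iterate_eq_zero hθ hpres hB h))
  refine (herg B' hB' hinv).2.imp (fun h0 => ?_) (fun h0 => ?_)
  · rw [← hV.eq_of_symmDiff_eq_zero hB' hB hnull, h0]
  · rw [← hV.eq_of_symmDiff_eq_zero hB'.compl hB.compl (by rwa [compl_symmDiff_compl]), h0]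

theorem IsUpperProb.ergodicCap_of_symmDiff (hV : IsUpperProb V)
    (h : ∀ B, MeasurableSet B → V ((θ ⁻¹' B) ∆ B) = 0 → V B = 0 ∨ V Bᶜ = 0) :
    ErgodicCap V θ :=
  hV.ergodicCap_iff.2 fun B hB hinv =>
    h B hB (by rw [hinv, symmDiff_self, bot_eq_empty, hV.empty])

theorem IsUpperProb.exists_pos_preimage_iterate_inter (hV : IsUpperProb V) (hVb : ContBelow V)
    (hθ : Measurable θ) (hA : MeasurableSet A) (hB : MeasurableSet B)
    (hA0 : V (⋃ n : ℕ, θ^[n + 1] ⁻¹' A)ᶜ = 0) (hVB : 0 < V B) :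
    ∃ n : ℕ, 0 < V (θ^[n + 1] ⁻¹' A ∩ B) := by
  by_contra! h
  have hmeas : ∀ n, MeasurableSet (θ^[n + 1] ⁻¹' A ∩ B) := fun n => (hθ.iterate _ hA).inter hB
  have hU : MeasurableSet (⋃ n : ℕ, θ^[n + 1] ⁻¹' A) := .iUnion fun n => hθ.iterate _ hA
  have hcover : B ⊆ (⋃ n : ℕ, θ^[n + 1] ⁻¹' A ∩ B) ∪ (⋃ n : ℕ, θ^[n + 1] ⁻¹' A)ᶜ := by
    rw [← iUnion_inter]
    intro x hx
    by_cases hxU : x ∈ ⋃ n : ℕ, θ^[n + 1] ⁻¹' A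
    exacts [.inl ⟨hxU, hx⟩, .inr hxU]
  have hB0 : V B = 0 :=
    hV.eq_zero_of_subset hB ((MeasurableSet.iUnion hmeas).union hU.compl) hcover
      (hV.union_eq_zero (.iUnion hmeas) hU.compl
        (hV.iUnion_eq_zero hVb hmeas fun n => (h n).antisymm (hV.nonneg (hmeas n))) hA0)
  exact hVB.ne' hB0

theorem IsUpperProb.ergodicCap_of_exists_pos_preimage_iterate_inter (hV : IsUpperProb V)
    (h : ∀ A B, MeasurableSet A → MeasurableSet B → 0 < V A → 0 < V B →
      ∃ n : ℕ, 0 < V (θ^[n + 1] ⁻¹' A ∩ B)) :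
    ErgodicCap V θ := by
  refine hV.ergodicCap_iff.2 fun B hB hinv => ?_
  by_contra! hpos
  obtain ⟨n, hn⟩ := h B Bᶜ hB hB.compl ((hV.nonneg hB).lt_of_ne' hpos.1)
    ((hV.nonneg hB.compl).lt_of_ne' hpos.2)
  rw [preimage_iterate_eq, Function.iterate_fixed hinv, inter_compl_self, hV.empty] at hn
  exact hn.false

end Ergodic

theorem stmt12 {Ω : Type*} [MeasurableSpace Ω]
    (𝒮 : Set (Set Ω → ℝ)) (h𝒮 : 𝒮.Nonempty) (hP : ∀ P ∈ 𝒮, IsFinAddProb P)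
    (V : Set Ω → ℝ) (hV : UpperProbOf 𝒮 V) (hVb : ContBelow V)
    (θ : Ω → Ω) (hθ : Measurable θ) (hpres : PreservesCap V θ) :
    (ErgodicCap V θ ↔
      ∀ B : Set Ω, MeasurableSet B → V (symmDiff (θ ⁻¹' B) B) = 0 →
        (V B = 0 ∨ V Bᶜ = 0)) ∧
    ((∀ A : Set Ω, MeasurableSet A → 0 < V A →
        V ((⋃ n : ℕ, θ^[n + 1] ⁻¹' A)ᶜ) = 0) →
      (∀ A B : Set Ω, MeasurableSet A → MeasurableSet B → 0 < V A → 0 < V B →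
        ∃ n : ℕ, 0 < V (θ^[n + 1] ⁻¹' A ∩ B))) ∧
    ((∀ A B : Set Ω, MeasurableSet A → MeasurableSet B → 0 < V A → 0 < V B →
        ∃ n : ℕ, 0 < V (θ^[n + 1] ⁻¹' A ∩ B)) →
      ErgodicCap V θ) := by
  have hU : IsUpperProb V := ⟨𝒮, h𝒮, hP, hV⟩
  refine ⟨⟨fun herg B hB => herg.eq_zero_or_compl_eq_zero_of_symmDiff hU hVb hθ hpres hB,
    hU.ergodicCap_of_symmDiff⟩, fun h3 A B hA hB hVA hVB => ?_,
    hU.ergodicCap_of_exists_pos_preimage_iterate_inter⟩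
  exact hU.exists_pos_preimage_iterate_inter hVb hθ hA hB (h3 A hA hVA) hVB
end

section
/- Let V be the upper probability on a measurable space (Ω,𝓕) generated by a nonempty set 𝒫 of finitely additive probabilities, assume V is continuous from below, and let θ : Ω → Ω be a measurable transformation preserving V. Then θ is ergodic with respect to V if and only if every bounded measurable ξ : Ω → ℝ satisfying ξ(θω) = ξ(ω) for all ω ∈ Ω is constant quasi-surely, i.e. there exists c ∈ ℝ with V({ω : ξ(ω) ≠ c}) = 0. Moreover, without any continuity assumption on V, if every measurable ξ : Ω → ℝ with V({ω : ξ(θω) ≠ ξ(ω)}) = 0 is constant quasi-surely, then every bounded measurable ξ with ξ∘θ = ξ is constant quasi-surely, and this in turn implies θ is ergodic with respect to V. -/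
open MeasureTheory Filter Topology Set

section Helpers
variable {Ω : Type*} [MeasurableSpace Ω] {𝒮 : Set (Set Ω → ℝ)} {V : Set Ω → ℝ}

lemma finAdd_mono {P : Set Ω → ℝ} (h : IsFinAddProb P) {A B : Set Ω}
    (hA : MeasurableSet A) (hB : MeasurableSet B) (hAB : A ⊆ B) : P A ≤ P B := by
  have hadd := h.2.2.2 A (B \ A) hA (hB.diff hA) disjoint_sdiff_right
  rw [Set.union_diff_cancel hAB] at hadd
  have h0 := (h.2.2.1 (B \ A) (hB.diff hA)).1
  linarith

lemma upper_bdd (hP : ∀ P ∈ 𝒮, IsFinAddProb P) {A : Set Ω} (hA : MeasurableSet A) :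
    BddAbove ((fun P => P A) '' 𝒮) := by
  refine ⟨1, ?_⟩
  rintro x ⟨P, hPm, rfl⟩
  exact ((hP P hPm).2.2.1 A hA).2

lemma le_upper (hP : ∀ P ∈ 𝒮, IsFinAddProb P) (hV : UpperProbOf 𝒮 V)
    {P : Set Ω → ℝ} (hPm : P ∈ 𝒮) {A : Set Ω} (hA : MeasurableSet A) : P A ≤ V A := by
  rw [hV A hA]
  exact le_csSup (upper_bdd hP hA) ⟨P, hPm, rfl⟩

lemma upper_le (h𝒮 : 𝒮.Nonempty) (hV : UpperProbOf 𝒮 V)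
    {A : Set Ω} (hA : MeasurableSet A) {c : ℝ} (h : ∀ P ∈ 𝒮, P A ≤ c) : V A ≤ c := by
  rw [hV A hA]
  refine csSup_le (h𝒮.image _) ?_
  rintro x ⟨P, hPm, rfl⟩
  exact h P hPm

lemma upper_nonneg (h𝒮 : 𝒮.Nonempty) (hP : ∀ P ∈ 𝒮, IsFinAddProb P) (hV : UpperProbOf 𝒮 V)
    {A : Set Ω} (hA : MeasurableSet A) : 0 ≤ V A := by
  obtain ⟨P, hPm⟩ := h𝒮
  exact le_trans ((hP P hPm).2.2.1 A hA).1 (le_upper hP hV hPm hA)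

lemma upper_mono (h𝒮 : 𝒮.Nonempty) (hP : ∀ P ∈ 𝒮, IsFinAddProb P) (hV : UpperProbOf 𝒮 V)
    {A B : Set Ω} (hA : MeasurableSet A) (hB : MeasurableSet B) (hAB : A ⊆ B) : V A ≤ V B := by
  refine upper_le h𝒮 hV hA fun P hPm => ?_
  exact le_trans (finAdd_mono (hP P hPm) hA hB hAB) (le_upper hP hV hPm hB)

lemma upper_empty (h𝒮 : 𝒮.Nonempty) (hP : ∀ P ∈ 𝒮, IsFinAddProb P) (hV : UpperProbOf 𝒮 V) :
    V ∅ = 0 := by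
  have h1 : V ∅ ≤ 0 := upper_le h𝒮 hV MeasurableSet.empty fun P hPm => le_of_eq (hP P hPm).1
  exact le_antisymm h1 (upper_nonneg h𝒮 hP hV MeasurableSet.empty)

lemma upper_univ (h𝒮 : 𝒮.Nonempty) (hP : ∀ P ∈ 𝒮, IsFinAddProb P) (hV : UpperProbOf 𝒮 V) :
    V Set.univ = 1 := by
  obtain ⟨P, hPm⟩ := h𝒮
  refine le_antisymm (upper_le ⟨P, hPm⟩ hV MeasurableSet.univ fun Q hQm => le_of_eq (hP Q hQm).2.1) ?_
  calc (1:ℝ) = P Set.univ := ((hP P hPm).2.1).symm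
    _ ≤ V Set.univ := le_upper hP hV hPm MeasurableSet.univ

lemma upper_zero_P (h𝒮 : 𝒮.Nonempty) (hP : ∀ P ∈ 𝒮, IsFinAddProb P) (hV : UpperProbOf 𝒮 V)
    {A : Set Ω} (hA : MeasurableSet A) (h0 : V A = 0) {P : Set Ω → ℝ} (hPm : P ∈ 𝒮) :
    P A = 0 :=
  le_antisymm (h0 ▸ le_upper hP hV hPm hA) ((hP P hPm).2.2.1 A hA).1

end Helpers

section Main
variable {Ω : Type*} [MeasurableSpace Ω] {𝒮 : Set (Set Ω → ℝ)} {V : Set Ω → ℝ}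

lemma part3 (h𝒮 : 𝒮.Nonempty) (hP : ∀ P ∈ 𝒮, IsFinAddProb P) (hV : UpperProbOf 𝒮 V)
    (θ : Ω → Ω)
    (H : ∀ ξ : Ω → ℝ, Measurable ξ → (∃ M : ℝ, ∀ ω, |ξ ω| ≤ M) →
        (∀ ω, ξ (θ ω) = ξ ω) → ∃ c : ℝ, V {ω | ξ ω ≠ c} = 0) :
    ErgodicCap V θ := by
  intro B hB hBinv
  set ξ : Ω → ℝ := B.indicator (fun _ => (1:ℝ)) with hξdef
  have hξm : Measurable ξ := (measurable_const (a := (1:ℝ))).indicator hB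
  have hξb : ∃ M : ℝ, ∀ ω, |ξ ω| ≤ M := by
    refine ⟨1, fun ω => ?_⟩
    by_cases h : ω ∈ B
    · rw [hξdef, Set.indicator_of_mem h]; norm_num
    · rw [hξdef, Set.indicator_of_notMem h]; norm_num
  have hmem : ∀ ω, θ ω ∈ B ↔ ω ∈ B := by
    intro ω
    rw [← Set.mem_preimage, hBinv]
  have hξi : ∀ ω, ξ (θ ω) = ξ ω := by
    intro ω
    by_cases h : ω ∈ B
    · rw [hξdef, Set.indicator_of_mem h, Set.indicator_of_mem ((hmem ω).mpr h)]
    · rw [hξdef, Set.indicator_of_notMem h,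
        Set.indicator_of_notMem (fun hh => h ((hmem ω).mp hh))]
  obtain ⟨c, hc⟩ := H ξ hξm hξb hξi
  have hne : MeasurableSet {ω | ξ ω ≠ c} := (hξm (measurableSet_singleton c)).compl
  by_cases hc1 : c = 1
  · -- Bᶜ ⊆ {ξ ≠ c}
    have hsub : Bᶜ ⊆ {ω | ξ ω ≠ c} := by
      intro ω hω
      simp only [Set.mem_setOf_eq, hξdef, Set.indicator_of_notMem (Set.notMem_of_mem_compl hω), hc1]
      norm_num
    have hVBc : V Bᶜ = 0 := le_antisymm
      (hc ▸ upper_mono h𝒮 hP hV hB.compl hne hsub)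
      (upper_nonneg h𝒮 hP hV hB.compl)
    have hVB : V B = 1 := by
      refine le_antisymm (upper_le h𝒮 hV hB fun P hPm => ((hP P hPm).2.2.1 B hB).2) ?_
      obtain ⟨P, hPm⟩ := h𝒮
      have hadd := (hP P hPm).2.2.2 B Bᶜ hB hB.compl disjoint_compl_right
      rw [Set.union_compl_self, (hP P hPm).2.1] at hadd
      have hPBc : P Bᶜ = 0 := upper_zero_P ⟨P, hPm⟩ hP hV hB.compl hVBc hPm
      have : P B = 1 := by linarith
      calc (1:ℝ) = P B := this.symm
        _ ≤ V B := le_upper hP hV hPm hB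
    exact ⟨Or.inr hVB, Or.inr hVBc⟩
  · have hsub : B ⊆ {ω | ξ ω ≠ c} := by
      intro ω hω
      simp only [Set.mem_setOf_eq, hξdef, Set.indicator_of_mem hω]
      exact fun h => hc1 h.symm
    have hVB : V B = 0 := le_antisymm
      (hc ▸ upper_mono h𝒮 hP hV hB hne hsub)
      (upper_nonneg h𝒮 hP hV hB)
    exact ⟨Or.inl hVB, Or.inl hVB⟩

lemma part1fwd (h𝒮 : 𝒮.Nonempty) (hP : ∀ P ∈ 𝒮, IsFinAddProb P) (hV : UpperProbOf 𝒮 V)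
    (θ : Ω → Ω) (hcb : ContBelow V) (herg : ErgodicCap V θ)
    (ξ : Ω → ℝ) (hξm : Measurable ξ) (hb : ∃ M : ℝ, ∀ ω, |ξ ω| ≤ M)
    (hinv : ∀ ω, ξ (θ ω) = ξ ω) : ∃ c : ℝ, V {ω | ξ ω ≠ c} = 0 := by
  obtain ⟨M, hM⟩ := hb
  have hBm : ∀ t : ℝ, MeasurableSet {ω | t ≤ ξ ω} := fun t => hξm measurableSet_Ici
  have hBi : ∀ t : ℝ, θ ⁻¹' {ω | t ≤ ξ ω} = {ω | t ≤ ξ ω} := by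
    intro t; ext ω; simp [Set.mem_preimage, hinv ω]
  have hdich : ∀ t : ℝ, V {ω | t ≤ ξ ω} = 0 ∨ V {ω | ξ ω < t} = 0 := by
    intro t
    rcases (herg _ (hBm t) (hBi t)).2 with h | h
    · exact Or.inl h
    · right
      have : {ω | t ≤ ξ ω}ᶜ = {ω | ξ ω < t} := by ext ω; simp [not_le]
      rwa [this] at h
  set S : Set ℝ := {t | V {ω | t ≤ ξ ω} = 0} with hSdef
  have hSne : S.Nonempty := by
    refine ⟨M + 1, ?_⟩
    have : {ω | M + 1 ≤ ξ ω} = ∅ := by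
      ext ω
      simp only [Set.mem_setOf_eq, Set.mem_empty_iff_false, iff_false, not_le]
      have := (abs_le.mp (hM ω)).2; linarith
    simp only [hSdef, Set.mem_setOf_eq, this]
    exact upper_empty h𝒮 hP hV
  have hSbd : BddBelow S := by
    refine ⟨-M, fun t ht => ?_⟩
    by_contra hlt
    push_neg at hlt
    have huniv : {ω | t ≤ ξ ω} = Set.univ := by
      ext ω
      simp only [Set.mem_setOf_eq, Set.mem_univ, iff_true]
      have := (abs_le.mp (hM ω)).1; linarith
    have : V {ω | t ≤ ξ ω} = 1 := by rw [huniv]; exact upper_univ h𝒮 hP hV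
    rw [ht] at this; norm_num at this
  set c := sInf S with hcdef
  -- V {ξ ≥ c + ε} = 0 for ε > 0
  have hup : ∀ ε : ℝ, 0 < ε → V {ω | c + ε ≤ ξ ω} = 0 := by
    intro ε hε
    obtain ⟨t, htS, htlt⟩ := exists_lt_of_csInf_lt hSne (show sInf S < c + ε by linarith)
    have hsub : {ω | c + ε ≤ ξ ω} ⊆ {ω | t ≤ ξ ω} := fun ω hω => le_trans htlt.le hω
    exact le_antisymm (htS ▸ upper_mono h𝒮 hP hV (hBm _) (hBm t) hsub)
      (upper_nonneg h𝒮 hP hV (hBm _))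
  -- V {ξ < t} = 0 for t < c
  have hdown : ∀ t : ℝ, t < c → V {ω | ξ ω < t} = 0 := by
    intro t ht
    rcases hdich t with h | h
    · exact absurd (csInf_le hSbd h) (not_le.mpr ht)
    · exact h
  -- V {ξ > c} = 0 by continuity from below
  have hgt : V {ω | c < ξ ω} = 0 := by
    set A : ℕ → Set Ω := fun n => {ω | c + 1/(n+1) ≤ ξ ω} with hAdef
    have hAm : ∀ n, MeasurableSet (A n) := fun n => hBm _
    have hAmono : Monotone A := by
      intro n m hnm ω hω
      have h1 : (1:ℝ)/(m+1) ≤ 1/(n+1) := by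
        apply one_div_le_one_div_of_le
        · positivity
        · exact_mod_cast Nat.succ_le_succ hnm
      simp only [hAdef, Set.mem_setOf_eq] at hω ⊢
      linarith
    have hAun : (⋃ n, A n) = {ω | c < ξ ω} := by
      ext ω
      simp only [Set.mem_iUnion, hAdef, Set.mem_setOf_eq]
      constructor
      · rintro ⟨n, hn⟩
        have : (0:ℝ) < 1/(n+1) := by positivity
        linarith
      · intro h
        obtain ⟨n, hn⟩ := exists_nat_one_div_lt (show (0:ℝ) < ξ ω - c by linarith)
        exact ⟨n, by push_cast at hn ⊢; linarith⟩
    have htd := hcb A hAm hAmono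
    rw [hAun] at htd
    have hz : ∀ n, V (A n) = 0 := fun n => hup _ (by positivity)
    have : Filter.Tendsto (fun n => V (A n)) Filter.atTop (nhds 0) := by
      simp only [hz]; exact tendsto_const_nhds
    exact tendsto_nhds_unique htd this
  -- V {ξ < c} = 0 by continuity from below
  have hlt : V {ω | ξ ω < c} = 0 := by
    set A : ℕ → Set Ω := fun n => {ω | ξ ω < c - 1/(n+1)} with hAdef
    have hAm : ∀ n, MeasurableSet (A n) := fun n => hξm measurableSet_Iio
    have hAmono : Monotone A := by
      intro n m hnm ω hω
      have h1 : (1:ℝ)/(m+1) ≤ 1/(n+1) := by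
        apply one_div_le_one_div_of_le
        · positivity
        · exact_mod_cast Nat.succ_le_succ hnm
      simp only [hAdef, Set.mem_setOf_eq] at hω ⊢
      linarith
    have hAun : (⋃ n, A n) = {ω | ξ ω < c} := by
      ext ω
      simp only [Set.mem_iUnion, hAdef, Set.mem_setOf_eq]
      constructor
      · rintro ⟨n, hn⟩
        have : (0:ℝ) < 1/(n+1) := by positivity
        linarith
      · intro h
        obtain ⟨n, hn⟩ := exists_nat_one_div_lt (show (0:ℝ) < c - ξ ω by linarith)
        exact ⟨n, by push_cast at hn ⊢; linarith⟩
    have htd := hcb A hAm hAmono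
    rw [hAun] at htd
    have hz : ∀ n, V (A n) = 0 := fun n => hdown _ (by
      have : (0:ℝ) < 1/((n:ℝ)+1) := by positivity
      linarith)
    have : Filter.Tendsto (fun n => V (A n)) Filter.atTop (nhds 0) := by
      simp only [hz]; exact tendsto_const_nhds
    exact tendsto_nhds_unique htd this
  -- combine
  refine ⟨c, ?_⟩
  have hnem : MeasurableSet {ω | ξ ω ≠ c} := (hξm (measurableSet_singleton c)).compl
  have hltm : MeasurableSet {ω | ξ ω < c} := hξm measurableSet_Iio
  have hgtm : MeasurableSet {ω | c < ξ ω} := hξm measurableSet_Ioi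
  refine le_antisymm (upper_le h𝒮 hV hnem fun P hPm => ?_) (upper_nonneg h𝒮 hP hV hnem)
  have hPlt : P {ω | ξ ω < c} = 0 := upper_zero_P h𝒮 hP hV hltm hlt hPm
  have hPgt : P {ω | c < ξ ω} = 0 := upper_zero_P h𝒮 hP hV hgtm hgt hPm
  have hun : {ω | ξ ω ≠ c} = {ω | ξ ω < c} ∪ {ω | c < ξ ω} := by
    ext ω
    simp only [Set.mem_setOf_eq, Set.mem_union]
    constructor
    · exact fun h => lt_or_gt_of_ne h
    · rintro (h | h)
      · exact ne_of_lt h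
      · exact ne_of_gt h
  have hdisj : Disjoint {ω | ξ ω < c} {ω | c < ξ ω} := by
    rw [Set.disjoint_left]
    intro ω h1 h2
    simp only [Set.mem_setOf_eq] at h1 h2
    exact absurd (lt_trans h1 h2) (lt_irrefl _)
  rw [hun, (hP P hPm).2.2.2 _ _ hltm hgtm hdisj, hPlt, hPgt]
  norm_num

end Main

theorem stmt14 {Ω : Type*} [MeasurableSpace Ω]
    (𝒮 : Set (Set Ω → ℝ)) (h𝒮 : 𝒮.Nonempty) (hP : ∀ P ∈ 𝒮, IsFinAddProb P)
    (V : Set Ω → ℝ) (hV : UpperProbOf 𝒮 V)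
    (θ : Ω → Ω) (hθ : Measurable θ) (hpres : PreservesCap V θ) :
    (ContBelow V →
      (ErgodicCap V θ ↔
        ∀ ξ : Ω → ℝ, Measurable ξ → (∃ M : ℝ, ∀ ω, |ξ ω| ≤ M) →
          (∀ ω, ξ (θ ω) = ξ ω) → ∃ c : ℝ, V {ω | ξ ω ≠ c} = 0)) ∧
    ((∀ ξ : Ω → ℝ, Measurable ξ → V {ω | ξ (θ ω) ≠ ξ ω} = 0 →
        ∃ c : ℝ, V {ω | ξ ω ≠ c} = 0) →
      (∀ ξ : Ω → ℝ, Measurable ξ → (∃ M : ℝ, ∀ ω, |ξ ω| ≤ M) →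
        (∀ ω, ξ (θ ω) = ξ ω) → ∃ c : ℝ, V {ω | ξ ω ≠ c} = 0)) ∧
    ((∀ ξ : Ω → ℝ, Measurable ξ → (∃ M : ℝ, ∀ ω, |ξ ω| ≤ M) →
        (∀ ω, ξ (θ ω) = ξ ω) → ∃ c : ℝ, V {ω | ξ ω ≠ c} = 0) →
      ErgodicCap V θ) := by
  refine ⟨fun hcb => ⟨fun herg ξ hm hb hi => part1fwd h𝒮 hP hV θ hcb herg ξ hm hb hi,
    fun H => part3 h𝒮 hP hV θ H⟩,
    fun H ξ hm hb hi => ?_, fun H => part3 h𝒮 hP hV θ H⟩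
  apply H ξ hm
  have hE : {ω | ξ (θ ω) ≠ ξ ω} = ∅ := by ext ω; simp [hi ω]
  rw [hE]
  exact upper_empty h𝒮 hP hV
end
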